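/- arXiv:2108.10405 — 10 statements merged into one kernel-verified Lean document; each statement's English description precedes it below -/
import Mathlib

section
/- There do not exist positive semidefinite 4×4 matrices X and Y with P XP = X, P Y P = Y (where P is the orthogonal projection onto the symmetric subspace of C^2 ⊗ C^2) such that W = P X^Γ P + Y, where W is the matrix with rows [0,0,0,-2],[0,1,1,0],[0,1,1,0],[-2,0,0,0] and Γ denotes the partial transpose on the second tensor factor. -/
open Matrix ComplexOrder

/-- Orthogonal projection onto the symmetric subspace of ℂ^d ⊗ ℂ^d. -/
noncomputable def symProj (d : ℕ) : Matrix (Fin d × Fin d) (Fin d × Fin d) ℂ :=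
  fun p q => (((if p.1 = q.1 ∧ p.2 = q.2 then 1 else 0) +
               (if p.1 = q.2 ∧ p.2 = q.1 then 1 else 0) : ℂ)) / 2

/-- Partial transpose on the second tensor factor. -/
noncomputable def ptrans {d : ℕ} (A : Matrix (Fin d × Fin d) (Fin d × Fin d) ℂ) :
    Matrix (Fin d × Fin d) (Fin d × Fin d) ℂ :=
  fun p q => A (p.1, q.2) (q.1, p.2)

/-- The witness W with rows [0,0,0,-2],[0,1,1,0],[0,1,1,0],[-2,0,0,0], indexed
by (Fin 2 × Fin 2) with lexicographic basis ordering (0,0),(0,1),(1,0),(1,1). -/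
noncomputable def Wwit : Matrix (Fin 2 × Fin 2) (Fin 2 × Fin 2) ℂ :=
  fun p q =>
    if (p = (0, 0) ∧ q = (1, 1)) ∨ (p = (1, 1) ∧ q = (0, 0)) then -2
    else if (p = (0, 1) ∨ p = (1, 0)) ∧ (q = (0, 1) ∨ q = (1, 0)) then 1
    else 0

/-! Since `P` fixes every `|ii⟩`, the `(ii, jj)` entries of `W = P X^Γ P + Y` read
`W_{ii,jj} = X_{ij,ji} + Y_{ii,jj}`. At `i = j = 0` this gives `X_{00,00} + Y_{00,00} = 0`, so the
positive semidefinite `Y` has a zero diagonal entry and hence `Y_{00,11} = 0`. At `(i, j) = (0, 1)` it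
then gives `X_{01,10} = -2`. But `X = P X P` is invariant under swapping the tensor factors of its
column index, so `X_{01,01} = X_{01,10} = -2`, contradicting positivity of `X`. -/

theorem Matrix.PosSemidef.apply_eq_zero_of_diag_eq_zero {𝕜 n : Type*} [RCLike 𝕜] [Fintype n]
    {A : Matrix n n 𝕜} (hA : A.PosSemidef) {i : n} (hi : A i i = 0) (j : n) :
    A i j = 0 := by
  classical
  have hcol : A *ᵥ Pi.single i 1 = 0 :=
    (hA.dotProduct_mulVec_zero_iff _).1 (by simpa [mulVec_single_one] using hi)
  rw [← hA.isHermitian.apply, ← star_zero]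
  congr 1
  simpa [mulVec_single_one] using congrFun hcol j

section SymmetricProjection

variable {d : ℕ}

theorem symProj_apply_swap (p q : Fin d × Fin d) : symProj d p q.swap = symProj d p q := by
  simp only [symProj, Prod.fst_swap, Prod.snd_swap, add_comm]

theorem symProj_diag_apply (i : Fin d) (q : Fin d × Fin d) :
    symProj d (i, i) q = if (i, i) = q then 1 else 0 := by
  obtain ⟨a, b⟩ := q
  simp only [symProj, Prod.mk.injEq, and_comm (a := i = b)]
  split_ifs <;> norm_num

theorem symProj_apply_diag (p : Fin d × Fin d) (j : Fin d) :
    symProj d p (j, j) = if p = (j, j) then 1 else 0 := by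
  obtain ⟨a, b⟩ := p
  simp only [symProj, Prod.mk.injEq]
  split_ifs <;> norm_num

theorem symProj_mul_apply_diag (A : Matrix (Fin d × Fin d) (Fin d × Fin d) ℂ) (i : Fin d)
    (q : Fin d × Fin d) : (symProj d * A) (i, i) q = A (i, i) q := by
  simp [mul_apply, symProj_diag_apply]

theorem mul_symProj_apply_diag (A : Matrix (Fin d × Fin d) (Fin d × Fin d) ℂ)
    (p : Fin d × Fin d) (j : Fin d) : (A * symProj d) p (j, j) = A p (j, j) := by
  simp [mul_apply, symProj_apply_diag]

theorem mul_symProj_apply_swap (A : Matrix (Fin d × Fin d) (Fin d × Fin d) ℂ)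
    (p q : Fin d × Fin d) : (A * symProj d) p q.swap = (A * symProj d) p q := by
  simp only [mul_apply, symProj_apply_swap]

theorem symProj_mul_mul_symProj_apply_diag (A : Matrix (Fin d × Fin d) (Fin d × Fin d) ℂ)
    (i j : Fin d) : (symProj d * A * symProj d) (i, i) (j, j) = A (i, i) (j, j) := by
  rw [mul_symProj_apply_diag, symProj_mul_apply_diag]

theorem apply_swap_of_symProj_mul_mul_symProj_eq {A : Matrix (Fin d × Fin d) (Fin d × Fin d) ℂ}
    (hA : symProj d * A * symProj d = A) (p q : Fin d × Fin d) : A p q.swap = A p q := by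
  rw [← hA, mul_symProj_apply_swap]

theorem ptrans_apply_diag (A : Matrix (Fin d × Fin d) (Fin d × Fin d) ℂ) (i j : Fin d) :
    ptrans A (i, i) (j, j) = A (i, j) (j, i) :=
  rfl

end SymmetricProjection

theorem stmt1 :
    ¬ ∃ X Y : Matrix (Fin 2 × Fin 2) (Fin 2 × Fin 2) ℂ,
      X.PosSemidef ∧ Y.PosSemidef ∧
      symProj 2 * X * symProj 2 = X ∧ symProj 2 * Y * symProj 2 = Y ∧
      Wwit = symProj 2 * ptrans X * symProj 2 + Y := by
  rintro ⟨X, Y, hX, hY, hPX, -, hW⟩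
  have hW_diag (i j : Fin 2) : Wwit (i, i) (j, j) = X (i, j) (j, i) + Y (i, i) (j, j) := by
    rw [hW, Matrix.add_apply, symProj_mul_mul_symProj_apply_diag, ptrans_apply_diag]
  have hY00 : Y (0, 0) (0, 0) = 0 := by
    have h := hW_diag 0 0
    rw [show Wwit (0, 0) (0, 0) = 0 by simp [Wwit]] at h
    exact ((add_eq_zero_iff_of_nonneg hX.diag_nonneg hY.diag_nonneg).1 h.symm).2
  have hX_off : X (0, 1) (1, 0) = -2 := by
    have h := hW_diag 0 1
    rwa [hY.apply_eq_zero_of_diag_eq_zero hY00, add_zero, show Wwit (0, 0) (1, 1) = -2 by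
      simp [Wwit], eq_comm] at h
  have hX_diag : X (0, 1) (0, 1) = -2 :=
    (apply_swap_of_symProj_mul_mul_symProj_eq hPX (0, 1) (0, 1)).symm.trans hX_off
  have hX_nonneg : (0 : ℂ) ≤ X (0, 1) (0, 1) := hX.diag_nonneg
  rw [hX_diag] at hX_nonneg
  norm_num at hX_nonneg
end

section
/- If v ∈ C^d ⊗ C^d lies in the symmetric subspace and W = P (vv*)^Γ P, where P is the orthogonal projection onto the symmetric subspace and Γ is the partial transpose, then all entries of W are real, and moreover W = P (xx*)^Γ P + P (yy*)^Γ P where x = Re(v) and y = Im(v). -/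
open Matrix ComplexOrder

noncomputable def symSubspace (d : ℕ) : Submodule ℂ (Fin d × Fin d → ℂ) :=
  Submodule.span ℂ { x | ∃ v : Fin d → ℂ, x = fun p => v p.1 * v p.2 }

/-!
Write `a = v (i, l)`, `b = v (j, k)`, `c = v (j, l)`, `e = v (i, k)`. Sandwiching between `P`
averages over swapping the two row indices and the two column indices, so for symmetric `v` the
entry `((i, j), (k, l))` of `P (v v*)^Γ P` is `(a b̄ + b ā + c ē + e c̄) / 4 = (Re (a b̄) + Re (c ē)) / 2`.
This is real, and `Re (a b̄) = Re a Re b + Im a Im b` splits it into the same expressions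
for `Re v` and `Im v`, which are again symmetric.
-/

section SymProj

variable {d : ℕ}

theorem apply_swap_eq_of_mem_symSubspace {v : Fin d × Fin d → ℂ} (hv : v ∈ symSubspace d)
    (i j : Fin d) : v (i, j) = v (j, i) := by
  induction hv using Submodule.span_induction generalizing i j with
  | mem x hx => obtain ⟨w, rfl⟩ := hx; exact mul_comm _ _
  | zero => rfl
  | add a b _ _ ha hb => simp [ha i j, hb i j]
  | smul c a _ ha => simp [ha i j]

theorem symProj_apply (p q : Fin d × Fin d) :
    symProj d p q = ((if p = q then 1 else 0) + (if p = q.swap then 1 else 0)) / 2 := by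
  simp [symProj, Prod.ext_iff]

theorem mul_symProj_apply (A : Matrix (Fin d × Fin d) (Fin d × Fin d) ℂ) (p q : Fin d × Fin d) :
    (A * symProj d) p q = (A p q + A p q.swap) / 2 := by
  simp only [mul_apply, symProj_apply, mul_div_assoc', mul_add, mul_ite, mul_one, mul_zero,
    ← Finset.sum_div, Finset.sum_add_distrib, Finset.sum_ite_eq', Finset.mem_univ, if_true]

theorem symProj_mul_apply (A : Matrix (Fin d × Fin d) (Fin d × Fin d) ℂ) (p q : Fin d × Fin d) :
    (symProj d * A) p q = (A p q + A p.swap q) / 2 := by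
  have hswap (r : Fin d × Fin d) : p = r.swap ↔ p.swap = r := by
    rw [← Prod.swap_inj, Prod.swap_swap]
  simp only [mul_apply, symProj_apply, hswap, div_mul_eq_mul_div, add_mul, ite_mul, one_mul,
    zero_mul, ← Finset.sum_div, Finset.sum_add_distrib, Finset.sum_ite_eq, Finset.mem_univ,
    if_true]

theorem symProj_mul_mul_symProj_apply (A : Matrix (Fin d × Fin d) (Fin d × Fin d) ℂ)
    (p q : Fin d × Fin d) :
    (symProj d * A * symProj d) p q = (A p q + A p.swap q + A p q.swap + A p.swap q.swap) / 4 := by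
  rw [mul_symProj_apply, symProj_mul_apply, symProj_mul_apply]
  ring

theorem symProj_mul_ptrans_mul_symProj_apply {u : Fin d × Fin d → ℂ}
    (hu : ∀ i j, u (i, j) = u (j, i)) (i j k l : Fin d) :
    (symProj d * ptrans (vecMulVec u (star u)) * symProj d) (i, j) (k, l) =
      (((u (i, l) * star (u (j, k))).re + (u (j, l) * star (u (i, k))).re : ℝ) / 2 : ℂ) := by
  rw [symProj_mul_mul_symProj_apply]
  simp only [ptrans, vecMulVec_apply, Pi.star_apply, Prod.swap_prod_mk]
  rw [hu k j, hu l i, hu l j, hu k i]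
  apply Complex.ext <;>
    simp only [RCLike.star_def, Complex.div_ofNat_re, Complex.div_ofNat_im, Complex.add_re,
      Complex.add_im, Complex.mul_re, Complex.mul_im, Complex.conj_re, Complex.conj_im,
      Complex.ofReal_add, Complex.ofReal_re, Complex.ofReal_im] <;>
    ring

end SymProj

theorem stmt2 (d : ℕ) (v : Fin d × Fin d → ℂ) (hv : v ∈ symSubspace d)
    (W : Matrix (Fin d × Fin d) (Fin d × Fin d) ℂ)
    (hW : W = symProj d * ptrans (vecMulVec v (star v)) * symProj d)
    (x y : Fin d × Fin d → ℂ)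
    (hx : x = fun p => ((v p).re : ℂ)) (hy : y = fun p => ((v p).im : ℂ)) :
    (∀ p q, (W p q).im = 0) ∧
    W = symProj d * ptrans (vecMulVec x (star x)) * symProj d +
        symProj d * ptrans (vecMulVec y (star y)) * symProj d := by
  subst hW hx hy
  have hv_symm := apply_swap_eq_of_mem_symSubspace hv
  have hre_symm (i j : Fin d) : ((v (i, j)).re : ℂ) = (v (j, i)).re := by rw [hv_symm]
  have him_symm (i j : Fin d) : ((v (i, j)).im : ℂ) = (v (j, i)).im := by rw [hv_symm]
  refine ⟨fun ⟨i, j⟩ ⟨k, l⟩ => ?_, ?_⟩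
  · rw [symProj_mul_ptrans_mul_symProj_apply hv_symm]
    norm_cast
  · ext ⟨i, j⟩ ⟨k, l⟩
    rw [Matrix.add_apply, symProj_mul_ptrans_mul_symProj_apply hv_symm,
      symProj_mul_ptrans_mul_symProj_apply hre_symm, symProj_mul_ptrans_mul_symProj_apply him_symm]
    simp only [Complex.mul_re, Complex.star_def, Complex.conj_re, Complex.conj_im,
      Complex.ofReal_re, Complex.ofReal_im]
    push_cast
    ring
end

section
/- Suppose v ∈ R^d ⊗ R^d is symmetric with spectral decomposition v = Σ_{j=1}^d α_j w_j ⊗ w_j, where α_j ∈ R and {w_j} is an orthonormal basis of R^d. Then for all 1 ≤ i ≤ j ≤ d, the vector x_{i,j} := w_i ⊗ w_j + w_j ⊗ w_i is an eigenvector of P (vv*)^Γ P with eigenvalue α_i α_j, where P is the orthogonal projection onto the symmetric subspace of C^d ⊗ C^d and Γ is the partial transpose. -/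
/-!
Read `v` as the real symmetric matrix `V = ∑ α_k w_k w_kᵀ`, so that `V w_k = α_k w_k`, and a vector
`x` of `ℂ^d ⊗ ℂ^d` as the matrix `X`. Then `(vv*)^Γ` acts by `X ↦ V Xᵀ V`, which sends
`w_i w_jᵀ + w_j w_iᵀ` to `α_i α_j (w_j w_iᵀ + w_i w_jᵀ)`. This vector is symmetric, hence fixed by
the projection `P` on both sides.
-/

open Matrix ComplexOrder

variable {d : ℕ}

lemma symProj_mulVec_of_swap_eq (x : Fin d × Fin d → ℂ) (hx : ∀ a b, x (a, b) = x (b, a)) :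
    symProj d *ᵥ x = x := by
  funext p
  have hdiag : ∑ q : Fin d × Fin d, (if p.1 = q.1 ∧ p.2 = q.2 then (1 : ℂ) else 0) * x q
      = x p := by
    simp [← Prod.ext_iff]
  have hswap : ∑ q : Fin d × Fin d, (if p.1 = q.2 ∧ p.2 = q.1 then (1 : ℂ) else 0) * x q
      = x p := by
    simp [Fintype.sum_prod_type, ite_and, eq_comm, hx p.2 p.1]
  simp only [mulVec, dotProduct, symProj, div_mul_eq_mul_div, add_mul]
  rw [← Finset.sum_div, Finset.sum_add_distrib, hdiag, hswap]
  ring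

lemma ptrans_vecMulVec_mulVec_apply (u x : Fin d × Fin d → ℂ) (p : Fin d × Fin d) :
    (ptrans (vecMulVec u (star u)) *ᵥ x) p
      = ∑ a, ∑ b, u (p.1, b) * star (u (a, p.2)) * x (a, b) := by
  simp [mulVec, dotProduct, ptrans, vecMulVec_apply, Fintype.sum_prod_type]

lemma sum_spectral_mul_eq {R : Type*} [CommSemiring R] (α : Fin d → R) (w : Fin d → Fin d → R)
    (horth : ∀ j k, w j ⬝ᵥ w k = if j = k then 1 else 0) (k b : Fin d) :
    ∑ a, (∑ j, α j * (w j a * w j b)) * w k a = α k * w k b := by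
  calc ∑ a, (∑ j, α j * (w j a * w j b)) * w k a
      = ∑ j, α j * w j b * (w j ⬝ᵥ w k) := by
        simp only [dotProduct, Finset.sum_mul, Finset.mul_sum]
        rw [Finset.sum_comm]
        refine Finset.sum_congr rfl fun j _ => Finset.sum_congr rfl fun a _ => ?_
        ring
    _ = α k * w k b := by simp [horth]

lemma sum_sum_mul_symTensor {R : Type*} [CommSemiring R] (u : Fin d × Fin d → R)
    (hu : ∀ a b, u (a, b) = u (b, a)) (μ : Fin d → R) (w : Fin d → Fin d → R)
    (heig : ∀ k b, ∑ a, u (a, b) * w k a = μ k * w k b) (i j : Fin d) (p : Fin d × Fin d) :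
    ∑ a, ∑ b, u (p.1, b) * u (a, p.2) * (w i a * w j b + w j a * w i b)
      = μ i * μ j * (w i p.1 * w j p.2 + w j p.1 * w i p.2) := by
  have heig' : ∀ k, ∑ b, u (p.1, b) * w k b = μ k * w k p.1 := fun k => by
    simpa only [hu p.1] using heig k p.1
  calc ∑ a, ∑ b, u (p.1, b) * u (a, p.2) * (w i a * w j b + w j a * w i b)
      = (∑ a, u (a, p.2) * w i a) * (∑ b, u (p.1, b) * w j b)
        + (∑ a, u (a, p.2) * w j a) * (∑ b, u (p.1, b) * w i b) := by
        simp only [Finset.sum_mul_sum, ← Finset.sum_add_distrib]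
        refine Finset.sum_congr rfl fun a _ => Finset.sum_congr rfl fun b _ => ?_
        ring
    _ = μ i * μ j * (w i p.1 * w j p.2 + w j p.1 * w i p.2) := by
        rw [heig i, heig j, heig' i, heig' j]
        ring

lemma ptrans_vecMulVec_ofReal_mulVec_symTensor (u : Fin d × Fin d → ℝ)
    (hu : ∀ a b, u (a, b) = u (b, a)) (μ : Fin d → ℝ) (w : Fin d → Fin d → ℝ)
    (heig : ∀ k b, ∑ a, u (a, b) * w k a = μ k * w k b) (i j : Fin d) :
    ptrans (vecMulVec (fun p => (u p : ℂ)) (star fun p => (u p : ℂ)))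
        *ᵥ (fun p => ((w i p.1 * w j p.2 + w j p.1 * w i p.2 : ℝ) : ℂ))
      = ((μ i * μ j : ℝ) : ℂ) • fun p => ((w i p.1 * w j p.2 + w j p.1 * w i p.2 : ℝ) : ℂ) := by
  funext p
  rw [ptrans_vecMulVec_mulVec_apply]
  simp only [Complex.star_def, Complex.conj_ofReal, Pi.smul_apply, smul_eq_mul]
  exact_mod_cast sum_sum_mul_symTensor u hu μ w heig i j p

theorem stmt3_general (d : ℕ) (v : Fin d × Fin d → ℝ) (α : Fin d → ℝ) (w : Fin d → Fin d → ℝ)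
    (horth : ∀ j k : Fin d, w j ⬝ᵥ w k = if j = k then 1 else 0)
    (hdecomp : v = fun p => ∑ j : Fin d, α j * (w j p.1 * w j p.2))
    (vc : Fin d × Fin d → ℂ) (hvc : vc = fun p => ((v p : ℝ) : ℂ))
    (i j : Fin d)
    (x : Fin d × Fin d → ℂ)
    (hx : x = fun p => ((w i p.1 * w j p.2 + w j p.1 * w i p.2 : ℝ) : ℂ)) :
    (symProj d * ptrans (vecMulVec vc (star vc)) * symProj d).mulVec x
      = ((α i * α j : ℝ) : ℂ) • x := by
  have hv : ∀ a b, v (a, b) = v (b, a) := fun a b => by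
    simp only [hdecomp, mul_comm (w _ a)]
  have heig : ∀ k b, ∑ a, v (a, b) * w k a = α k * w k b := by
    subst hdecomp
    exact sum_spectral_mul_eq α w horth
  have hx_swap : ∀ a b, x (a, b) = x (b, a) := fun a b => by
    simp only [hx]
    congr 1
    ring
  rw [← mulVec_mulVec, ← mulVec_mulVec, symProj_mulVec_of_swap_eq x hx_swap, hvc, hx,
    ptrans_vecMulVec_ofReal_mulVec_symTensor v hv α w heig, mulVec_smul, ← hx,
    symProj_mulVec_of_swap_eq x hx_swap]

theorem stmt3 (d : ℕ) (v : Fin d × Fin d → ℝ) (α : Fin d → ℝ) (w : Fin d → Fin d → ℝ)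
    (horth : ∀ j k : Fin d, w j ⬝ᵥ w k = if j = k then 1 else 0)
    (hdecomp : v = fun p => ∑ j : Fin d, α j * (w j p.1 * w j p.2))
    (vc : Fin d × Fin d → ℂ) (hvc : vc = fun p => ((v p : ℝ) : ℂ))
    (i j : Fin d) (hij : i ≤ j)
    (x : Fin d × Fin d → ℂ)
    (hx : x = fun p => ((w i p.1 * w j p.2 + w j p.1 * w i p.2 : ℝ) : ℂ)) :
    (symProj d * ptrans (vecMulVec vc (star vc)) * symProj d).mulVec x
      = ((α i * α j : ℝ) : ℂ) • x :=
  stmt3_general d v α w horth hdecomp vc hvc i j x hx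
end

section
/- If v ∈ R^d ⊗ R^d lies in the symmetric subspace, then the matrix P (vv*)^Γ P has at most ⌊d²/4⌋ negative eigenvalues, where P is the orthogonal projection onto the symmetric subspace of C^d ⊗ C^d and Γ is the partial transpose. -/
open Matrix ComplexOrder

/-!
Read `v` as the matrix `M i j = v (i, j)`. It is real symmetric, so `M = B - C` with `B, C`
positive semidefinite and `B * C = 0` (its positive and negative parts), whence
`rank B + rank C ≤ d`. The partial transpose `(vv*)^Γ` is `M ⊗ M` followed by the swap of the
tensor factors, and `P` absorbs that swap on either side, so
`P (vv*)^Γ P = P (B ⊗ B + C ⊗ C) P - 2 P (B ⊗ C) P`: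
a positive semidefinite matrix minus one of rank at most `rank B * rank C ≤ d² / 4`.
A Hermitian matrix `B' - C'` with `B' ⪰ 0` has at most `rank C'` negative eigenvalues, because
compressed to the span of the eigenvectors with negative eigenvalues, `C'` becomes positive
definite.
-/

open scoped Kronecker

namespace Matrix

theorem rank_kronecker_le {K l m n p : Type*} [Field K] [Fintype l] [Fintype m]
    [Fintype n] [Fintype p] (A : Matrix l m K) (B : Matrix n p K) :
    (A ⊗ₖ B).rank ≤ A.rank * B.rank := by
  classical
  let f := toLin (Pi.basisFun K m) (Pi.basisFun K l) A
  let g := toLin (Pi.basisFun K p) (Pi.basisFun K n) B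
  rw [rank_eq_finrank_range_toLin A (Pi.basisFun K l) (Pi.basisFun K m),
    rank_eq_finrank_range_toLin B (Pi.basisFun K n) (Pi.basisFun K p),
    rank_eq_finrank_range_toLin (A ⊗ₖ B) ((Pi.basisFun K l).tensorProduct (Pi.basisFun K n))
      ((Pi.basisFun K m).tensorProduct (Pi.basisFun K p)), toLin_kronecker,
    ← Module.finrank_tensorProduct]
  calc Module.finrank K (LinearMap.range (TensorProduct.map f g))
      ≤ Module.finrank K (LinearMap.range (TensorProduct.mapIncl (LinearMap.range f)
          (LinearMap.range g))) :=
        Submodule.finrank_mono (TensorProduct.range_map_mono (by simp) (by simp))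
    _ ≤ _ := LinearMap.finrank_range_le _

theorem kronecker_submatrix_swap {R l m n p : Type*} [CommMagma R] (A : Matrix l m R)
    (B : Matrix n p R) : (A ⊗ₖ B).submatrix Prod.swap Prod.swap = B ⊗ₖ A := by
  ext; simp [mul_comm]

variable {n 𝕜 : Type*} [RCLike 𝕜] [Fintype n] [DecidableEq n]

open scoped MatrixOrder in
theorem IsHermitian.exists_posSemidef_sub_mul_eq_zero {A : Matrix n n 𝕜} (hA : A.IsHermitian) :
    ∃ B C : Matrix n n 𝕜, B.PosSemidef ∧ C.PosSemidef ∧ A = B - C ∧ B * C = 0 :=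
  ⟨A⁺, A⁻, (CFC.posPart_nonneg A).posSemidef, (CFC.negPart_nonneg A).posSemidef,
    (CFC.posPart_sub_negPart A hA).symm, CFC.posPart_mul_negPart A⟩

theorem IsHermitian.card_filter_eigenvalues_neg_le_rank {A B C : Matrix n n 𝕜}
    (hA : A.IsHermitian) (hB : B.PosSemidef) (hABC : A = B - C) :
    (Finset.univ.filter fun i => hA.eigenvalues i < 0).card ≤ C.rank := by
  let ι : {i // hA.eigenvalues i < 0} → n := Subtype.val
  let U : Matrix n n 𝕜 := hA.eigenvectorUnitary
  let S := U.submatrix id ι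
  have hS : Sᴴ * A * S = (diagonal (RCLike.ofReal ∘ hA.eigenvalues)).submatrix ι ι := calc
    Sᴴ * A * S = (Uᴴ * A * U).submatrix ι ι := by
      rw [submatrix_mul _ _ _ id _ Function.bijective_id,
        submatrix_mul _ _ _ id _ Function.bijective_id, submatrix_id_id, conjTranspose_submatrix]
    _ = _ := by
      rw [← hA.conjStarAlgAut_star_eigenvectorUnitary, Unitary.conjStarAlgAut_apply,
        Unitary.coe_star, star_star, star_eq_conjTranspose]
  have hpd : (Sᴴ * C * S).PosDef := by
    have hneg : (-(Sᴴ * A * S)).PosDef := by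
      rw [hS, submatrix_diagonal _ _ Subtype.val_injective, diagonal_neg, posDef_diagonal_iff]
      intro i
      simpa using i.2
    have hC : Sᴴ * C * S = Sᴴ * B * S + -(Sᴴ * A * S) := by
      rw [show C = B - A by rw [hABC, sub_sub_cancel], Matrix.mul_sub, Matrix.sub_mul,
        sub_eq_add_neg]
    rw [hC]
    exact PosDef.posSemidef_add (hB.conjTranspose_mul_mul_same S) hneg
  calc (Finset.univ.filter fun i => hA.eigenvalues i < 0).card = (Sᴴ * C * S).rank := by
        rw [rank_of_isUnit _ hpd.isUnit, Fintype.card_subtype]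
    _ ≤ C.rank := (rank_mul_le_left _ _).trans (rank_mul_le_right _ _)

end Matrix

theorem Nat.mul_le_sq_div_four {a b d : ℕ} (h : a + b ≤ d) : a * b ≤ d ^ 2 / 4 := by
  rw [Nat.le_div_iff_mul_le four_pos]
  nlinarith [sq_nonneg ((a : ℤ) - b)]

section symProj

variable {d : ℕ}

theorem symProj_submatrix_swap_left : (symProj d).submatrix Prod.swap id = symProj d := by
  ext p q
  simp only [symProj, submatrix_apply, Prod.fst_swap, Prod.snd_swap, id_eq]
  rw [add_comm]
  simp only [and_comm]

theorem symProj_submatrix_swap_right : (symProj d).submatrix id Prod.swap = symProj d := by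
  ext p q
  simp only [symProj, submatrix_apply, Prod.fst_swap, Prod.snd_swap, id_eq]
  rw [add_comm]

theorem conjTranspose_symProj : (symProj d)ᴴ = symProj d := by
  ext p q
  simp only [symProj, conjTranspose_apply, star_div₀, star_add, apply_ite star, star_one,
    star_zero, star_ofNat, eq_comm]
  simp only [and_comm]

theorem symProj_mul_submatrix_swap {ι : Type*} (X : Matrix (Fin d × Fin d) ι ℂ) :
    symProj d * X.submatrix Prod.swap id = symProj d * X := by
  conv_lhs => rw [← symProj_submatrix_swap_right]
  rw [← submatrix_mul _ _ _ _ _ Prod.swap_bijective, submatrix_id_id]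

theorem submatrix_swap_mul_symProj {ι : Type*} (X : Matrix ι (Fin d × Fin d) ℂ) :
    X.submatrix id Prod.swap * symProj d = X * symProj d := by
  conv_lhs => rw [← symProj_submatrix_swap_left]
  rw [← submatrix_mul _ _ _ _ _ Prod.swap_bijective, submatrix_id_id]

theorem symProj_mul_kronecker_comm_mul_symProj (B C : Matrix (Fin d) (Fin d) ℂ) :
    symProj d * (C ⊗ₖ B) * symProj d = symProj d * (B ⊗ₖ C) * symProj d := by
  rw [← kronecker_submatrix_swap,
    show (B ⊗ₖ C).submatrix Prod.swap Prod.swap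
      = ((B ⊗ₖ C).submatrix Prod.swap id).submatrix id Prod.swap from rfl,
    mul_assoc, submatrix_swap_mul_symProj, ← mul_assoc, symProj_mul_submatrix_swap]

theorem ptrans_vecMulVec_star (v : Fin d × Fin d → ℂ) :
    ptrans (vecMulVec v (star v)) =
      (of (Function.curry v) ⊗ₖ (of (Function.curry v))ᴴ).submatrix id Prod.swap := by
  ext; simp [ptrans, vecMulVec_apply]

theorem apply_swap_of_mem_symSubspace {x : Fin d × Fin d → ℂ} (hx : x ∈ symSubspace d)
    (p : Fin d × Fin d) : x p.swap = x p := by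
  induction hx using Submodule.span_induction with
  | mem y hy => obtain ⟨w, rfl⟩ := hy; simp [mul_comm]
  | zero => rfl
  | add y z _ _ hy hz => simp [hy, hz]
  | smul c y _ hy => simp [hy]

theorem symProj_mul_kronecker_sub_mul_symProj (B C : Matrix (Fin d) (Fin d) ℂ) :
    symProj d * ((B - C) ⊗ₖ (B - C)) * symProj d =
      symProj d * (B ⊗ₖ B + C ⊗ₖ C) * symProj d
        - (2 : ℂ) • (symProj d * (B ⊗ₖ C) * symProj d) := by
  have hexpand : (B - C) ⊗ₖ (B - C) = B ⊗ₖ B + C ⊗ₖ C - (B ⊗ₖ C + C ⊗ₖ B) := by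
    ext; simp only [kroneckerMap_apply, Matrix.sub_apply, Matrix.add_apply]; ring
  rw [hexpand, two_smul, Matrix.mul_sub, Matrix.sub_mul, Matrix.mul_add, Matrix.add_mul,
    Matrix.mul_add, Matrix.add_mul, symProj_mul_kronecker_comm_mul_symProj B C]

end symProj

theorem stmt5 (d : ℕ) (v : Fin d × Fin d → ℝ)
    (vc : Fin d × Fin d → ℂ) (hvc : vc = fun p => ((v p : ℝ) : ℂ))
    (hv : vc ∈ symSubspace d)
    (W : Matrix (Fin d × Fin d) (Fin d × Fin d) ℂ)
    (hW : W = symProj d * ptrans (vecMulVec vc (star vc)) * symProj d)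
    (hHerm : W.IsHermitian) :
    (Finset.univ.filter (fun i => hHerm.eigenvalues i < 0)).card ≤ d ^ 2 / 4 := by
  have hM : (of (Function.curry vc)).IsHermitian := by
    ext i j
    have hreal : star (vc (j, i)) = vc (j, i) := by rw [hvc]; exact Complex.conj_ofReal _
    simpa [hreal] using apply_swap_of_mem_symSubspace hv (i, j)
  obtain ⟨B, C, hB, hC, hMBC, hBC⟩ := hM.exists_posSemidef_sub_mul_eq_zero
  have hWBC : W = symProj d * (B ⊗ₖ B + C ⊗ₖ C) * symProj d
      - (2 : ℂ) • (symProj d * (B ⊗ₖ C) * symProj d) := by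
    rw [hW, ptrans_vecMulVec_star, mul_assoc, submatrix_swap_mul_symProj, ← mul_assoc, hM.eq, hMBC,
      symProj_mul_kronecker_sub_mul_symProj]
  have hPSD : (symProj d * (B ⊗ₖ B + C ⊗ₖ C) * symProj d).PosSemidef := by
    simpa only [conjTranspose_symProj] using
      ((hB.kronecker hB).add (hC.kronecker hC)).conjTranspose_mul_mul_same (symProj d)
  calc _ ≤ ((2 : ℂ) • (symProj d * (B ⊗ₖ C) * symProj d)).rank :=
        hHerm.card_filter_eigenvalues_neg_le_rank hPSD hWBC
    _ ≤ (B ⊗ₖ C).rank := by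
        rw [rank_smul_of_mem_nonZeroDivisors _ (mem_nonZeroDivisors_of_ne_zero two_ne_zero)]
        exact (rank_mul_le_left _ _).trans (rank_mul_le_right _ _)
    _ ≤ B.rank * C.rank := rank_kronecker_le B C
    _ ≤ d ^ 2 / 4 := Nat.mul_le_sq_div_four (by
        simpa using rank_add_rank_le_card_of_mul_eq_zero hBC)
end

section
/- Let λ_1 ≥ λ_2 ≥ λ_3 ≥ 0 sum to 1 and satisfy λ_1 ≤ 2√(λ_2 λ_3). Then every Hermitian positive semidefinite 3×3 matrix ρ (representing a state on the symmetric subspace of C^2 ⊗ C^2) with eigenvalues λ_1, λ_2, λ_3 satisfies ν_1 − ν_2 − ν_3 ≤ λ_1 − 2√(λ_2 λ_3) ≤ 0, where ν_1 ≥ ν_2 ≥ ν_3 are the singular values of √D U^T S U √D, ρ = U D U* is a spectral decomposition, and S is the 3×3 matrix with rows [0,0,1],[0,−1,0],[1,0,0]. -/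
/-!
The matrix `M = √D V √D`, with `V = Uᵀ S U` unitary, has operator norm at most
`‖√D‖ ‖V‖ ‖√D‖ = λ₁`, so every singular value satisfies `ν_i ≤ λ₁`, while the product of the
singular values is `|det M| = λ₁ λ₂ λ₃`. Hence `λ₁ ν₂ ν₃ ≥ ν₁ ν₂ ν₃ = λ₁ λ₂ λ₃`, i.e.
`ν₂ ν₃ ≥ λ₂ λ₃`, and AM-GM gives `ν₁ - ν₂ - ν₃ ≤ λ₁ - 2 √(ν₂ ν₃) ≤ λ₁ - 2 √(λ₂ λ₃)`.
-/

open Matrix ComplexOrder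
open scoped Matrix.Norms.L2Operator

namespace Matrix

variable {n : Type*} [Fintype n] [DecidableEq n]

lemma IsHermitian.abs_eigenvalues_le_l2_opNorm {A : Matrix n n ℂ} (hA : A.IsHermitian) (i : n) :
    |hA.eigenvalues i| ≤ ‖A‖ := by
  have h := A.l2_opNorm_mulVec (hA.eigenvectorBasis i)
  rw [hA.mulVec_eigenvectorBasis] at h
  simpa [norm_smul] using h

lemma sqrt_eigenvalues_conjTranspose_mul_self_le_l2_opNorm (M : Matrix n n ℂ) (i : n) :
    √((posSemidef_conjTranspose_mul_self M).1.eigenvalues i) ≤ ‖M‖ := by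
  have h := (posSemidef_conjTranspose_mul_self M).1.abs_eigenvalues_le_l2_opNorm i
  rw [l2_opNorm_conjTranspose_mul_self, ← sq] at h
  exact Real.sqrt_le_iff.mpr ⟨norm_nonneg M, (le_abs_self _).trans h⟩

lemma prod_sqrt_eigenvalues_conjTranspose_mul_self (M : Matrix n n ℂ) :
    ∏ i, √((posSemidef_conjTranspose_mul_self M).1.eigenvalues i) = ‖M.det‖ := by
  have hP := posSemidef_conjTranspose_mul_self M
  have h : ∏ i, hP.1.eigenvalues i = ‖M.det‖ ^ 2 := by
    have hdet : star M.det * M.det = (‖M.det‖ : ℂ) ^ 2 := Complex.conj_mul' M.det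
    have h := hP.1.det_eq_prod_eigenvalues
    rw [det_mul, det_conjTranspose, hdet, ← RCLike.ofReal_prod,
      RCLike.ofReal_eq_complex_ofReal] at h
    exact_mod_cast h.symm
  rw [← Real.sqrt_prod _ fun i _ => hP.eigenvalues_nonneg i, h, Real.sqrt_sq (norm_nonneg _)]

lemma l2_opNorm_diagonal_sqrt_mul_unitary_mul_le {d : n → ℝ} {c : ℝ} (hc : 0 ≤ c)
    (hd : ∀ i, d i ≤ c) {V : Matrix n n ℂ} (hV : V ∈ unitaryGroup n ℂ) :
    ‖diagonal (fun i => ((√(d i) : ℝ) : ℂ)) * V * diagonal (fun i => ((√(d i) : ℝ) : ℂ))‖ ≤ c := by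
  have hR : ‖diagonal (fun i => ((√(d i) : ℝ) : ℂ))‖ ≤ √c := by
    rw [l2_opNorm_diagonal, pi_norm_le_iff_of_nonneg (Real.sqrt_nonneg c)]
    intro i
    rw [Complex.norm_real, Real.norm_of_nonneg (Real.sqrt_nonneg _)]
    exact Real.sqrt_le_sqrt (hd i)
  calc _ ≤ ‖diagonal (fun i => ((√(d i) : ℝ) : ℂ)) * V‖ *
        ‖diagonal (fun i => ((√(d i) : ℝ) : ℂ))‖ := l2_opNorm_mul _ _
    _ ≤ √c * √c := by
      rw [CStarRing.norm_mul_mem_unitary _ hV]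
      exact mul_le_mul hR hR (norm_nonneg _) (Real.sqrt_nonneg c)
    _ = c := Real.mul_self_sqrt hc

lemma norm_det_diagonal_sqrt_mul_unitary_mul {d : n → ℝ} (hd : ∀ i, 0 ≤ d i)
    {V : Matrix n n ℂ} (hV : V ∈ unitaryGroup n ℂ) :
    ‖(diagonal (fun i => ((√(d i) : ℝ) : ℂ)) * V * diagonal (fun i => ((√(d i) : ℝ) : ℂ))).det‖
      = ∏ i, d i := by
  have hdetV : ‖V.det‖ = 1 := CStarRing.norm_of_mem_unitary (det_of_mem_unitary hV)
  rw [det_mul, det_mul, norm_mul, norm_mul, hdetV, mul_one, det_diagonal, norm_prod,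
    ← Finset.prod_mul_distrib]
  refine Finset.prod_congr rfl fun i _ => ?_
  rw [Complex.norm_real, Real.norm_of_nonneg (Real.sqrt_nonneg _), Real.mul_self_sqrt (hd i)]

lemma transpose_mul_mul_mem_unitaryGroup {U S : Matrix n n ℂ} (hU : U ∈ unitaryGroup n ℂ)
    (hS : S ∈ unitaryGroup n ℂ) : Uᵀ * S * U ∈ unitaryGroup n ℂ :=
  mul_mem (mul_mem (transpose_mem_unitaryGroup_iff.mpr hU) hS) hU

lemma antidiagonal_sign_mem_unitaryGroup :
    !![0, 0, 1; 0, -1, 0; 1, 0, 0] ∈ unitaryGroup (Fin 3) ℂ := by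
  have hself : star !![(0 : ℂ), 0, 1; 0, -1, 0; 1, 0, 0] = !![0, 0, 1; 0, -1, 0; 1, 0, 0] := by
    ext i j
    fin_cases i <;> fin_cases j <;> simp
  rw [mem_unitaryGroup_iff, hself, mul_fin_three, one_fin_three]
  norm_num

end Matrix

lemma sub_sub_le_sub_two_sqrt_of_mul_eq {x y z a b c : ℝ} (hy : 0 ≤ y) (hz : 0 ≤ z)
    (hb : 0 ≤ b) (hba : b ≤ a) (hxa : x ≤ a) (hprod : x * y * z = a * b * c) :
    x - y - z ≤ a - 2 * √(b * c) := by
  rcases hb.trans hba |>.eq_or_lt with ha | ha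
  · have hb0 : b = 0 := le_antisymm (ha ▸ hba) hb
    rw [hb0, zero_mul, Real.sqrt_zero]
    linarith
  have hbc : b * c ≤ y * z := by
    refine le_of_mul_le_mul_left ?_ ha
    calc a * (b * c) = x * (y * z) := by rw [← mul_assoc, ← mul_assoc, hprod]
      _ ≤ a * (y * z) := mul_le_mul_of_nonneg_right hxa (mul_nonneg hy hz)
  have hamgm : 2 * √(y * z) ≤ y + z := by
    rw [Real.sqrt_mul hy]
    nlinarith [sq_nonneg (√y - √z), Real.sq_sqrt hy, Real.sq_sqrt hz]
  linarith [Real.sqrt_le_sqrt hbc]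

theorem stmt8_general (lam : Fin 3 → ℝ)
    (hsort : ∀ i j : Fin 3, i ≤ j → lam j ≤ lam i) (hnonneg : 0 ≤ lam 2)
    (habs : lam 0 ≤ 2 * Real.sqrt (lam 1 * lam 2))
    (U : Matrix (Fin 3) (Fin 3) ℂ) (hU : U ∈ Matrix.unitaryGroup (Fin 3) ℂ)
    (S : Matrix (Fin 3) (Fin 3) ℂ) (hS : S = !![0, 0, 1; 0, -1, 0; 1, 0, 0])
    (sqrtD : Matrix (Fin 3) (Fin 3) ℂ)
    (hsqrtD : sqrtD = Matrix.diagonal (fun i => ((Real.sqrt (lam i) : ℝ) : ℂ)))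
    (M : Matrix (Fin 3) (Fin 3) ℂ) (hM : M = sqrtD * Uᵀ * S * U * sqrtD)
    (ν : Fin 3 → ℝ)
    (hν : ∃ σ : Equiv.Perm (Fin 3), ∀ i,
      ν i = Real.sqrt ((Matrix.posSemidef_conjTranspose_mul_self M).1.eigenvalues (σ i))) :
    ν 0 - ν 1 - ν 2 ≤ lam 0 - 2 * Real.sqrt (lam 1 * lam 2) ∧
    lam 0 - 2 * Real.sqrt (lam 1 * lam 2) ≤ 0 := by
  obtain ⟨σ, hσ⟩ := hν
  have hlam_nonneg (i : Fin 3) : 0 ≤ lam i := hnonneg.trans (hsort i 2 (Fin.le_last i))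
  have hlam_le (i : Fin 3) : lam i ≤ lam 0 := hsort 0 i (Fin.zero_le i)
  have hV := transpose_mul_mul_mem_unitaryGroup hU (hS ▸ antidiagonal_sign_mem_unitaryGroup)
  have hM' : M = sqrtD * (Uᵀ * S * U) * sqrtD := by rw [hM]; simp only [mul_assoc]
  subst hsqrtD
  have hν_le (i : Fin 3) : ν i ≤ lam 0 := by
    rw [hσ i]
    calc _ ≤ ‖M‖ := sqrt_eigenvalues_conjTranspose_mul_self_le_l2_opNorm M (σ i)
      _ ≤ lam 0 := hM' ▸ l2_opNorm_diagonal_sqrt_mul_unitary_mul_le (hlam_nonneg 0) hlam_le hV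
  have hν_prod : ν 0 * ν 1 * ν 2 = lam 0 * lam 1 * lam 2 := by
    have hdet : ‖M.det‖ = ∏ i, lam i :=
      hM' ▸ norm_det_diagonal_sqrt_mul_unitary_mul hlam_nonneg hV
    have h := prod_sqrt_eigenvalues_conjTranspose_mul_self M
    rw [← Equiv.prod_comp σ, hdet] at h
    simpa only [Fin.prod_univ_three, ← hσ] using h
  have hν_nonneg (i : Fin 3) : 0 ≤ ν i := hσ i ▸ Real.sqrt_nonneg _
  exact ⟨sub_sub_le_sub_two_sqrt_of_mul_eq (hν_nonneg 1) (hν_nonneg 2) (hlam_nonneg 1)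
    (hlam_le 1) (hν_le 0) hν_prod, by linarith⟩

theorem stmt8 (lam : Fin 3 → ℝ)
    (hsort : ∀ i j : Fin 3, i ≤ j → lam j ≤ lam i) (hnonneg : 0 ≤ lam 2)
    (hsum : lam 0 + lam 1 + lam 2 = 1)
    (habs : lam 0 ≤ 2 * Real.sqrt (lam 1 * lam 2))
    (U : Matrix (Fin 3) (Fin 3) ℂ) (hU : U ∈ Matrix.unitaryGroup (Fin 3) ℂ)
    (S : Matrix (Fin 3) (Fin 3) ℂ) (hS : S = !![0, 0, 1; 0, -1, 0; 1, 0, 0])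
    (sqrtD : Matrix (Fin 3) (Fin 3) ℂ)
    (hsqrtD : sqrtD = Matrix.diagonal (fun i => ((Real.sqrt (lam i) : ℝ) : ℂ)))
    (M : Matrix (Fin 3) (Fin 3) ℂ) (hM : M = sqrtD * Uᵀ * S * U * sqrtD)
    (ν : Fin 3 → ℝ)
    (hν : ∃ σ : Equiv.Perm (Fin 3), ∀ i,
      ν i = Real.sqrt ((Matrix.posSemidef_conjTranspose_mul_self M).1.eigenvalues (σ i)))
    (hνsort : ∀ i j : Fin 3, i ≤ j → ν j ≤ ν i) :
    ν 0 - ν 1 - ν 2 ≤ lam 0 - 2 * Real.sqrt (lam 1 * lam 2) ∧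
    lam 0 - 2 * Real.sqrt (lam 1 * lam 2) ≤ 0 :=
  stmt8_general lam hsort hnonneg habs U hU S hS sqrtD hsqrtD M hM ν hν
end

section
/- For any 3×3 complex matrices A and B, the singular values (ordered σ_1 ≥ σ_2 ≥ σ_3) satisfy σ_2(AB) + σ_3(AB) ≥ σ_2(A)σ_3(B) + σ_3(A)σ_2(B). -/
open Matrix ComplexOrder

/-- `IsSingularValues M s` says that `s` lists the singular values of `M`
(the square roots of the eigenvalues of `Mᴴ * M`) in nonincreasing order. -/
noncomputable def IsSingularValues (M : Matrix (Fin 3) (Fin 3) ℂ) (s : Fin 3 → ℝ) : Prop :=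
  (∀ i j : Fin 3, i ≤ j → s j ≤ s i) ∧
  ∃ σ : Equiv.Perm (Fin 3), ∀ i,
    s i = Real.sqrt ((Matrix.posSemidef_conjTranspose_mul_self M).1.eigenvalues (σ i))

/-!
Write `μ = σ²` for the squared singular values, the eigenvalues of `Mᴴ * M`. The Rayleigh
quotient `‖M x‖² / ‖x‖²` lies between the smallest and the largest `μ`, and by the
Courant–Fischer principle `μ₂(C) ≥ k` as soon as `‖C x‖² ≥ k ‖x‖²` on a plane. Restricting `AB` to
the top two eigenvectors of `B`, or to the preimage under `B` of the top two eigenvectors of `A`,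
gives `σ₂(AB) ≥ σ₃(A) σ₂(B)` and `σ₂(AB) ≥ σ₂(A) σ₃(B)`; also `σ₁(AB) ≤ σ₁(A) σ₁(B)`, and
`σ₁σ₂σ₃(AB) = σ₁σ₂σ₃(A) · σ₁σ₂σ₃(B)` by taking determinants. The last two give
`xy ≤ σ₂σ₃(AB)` for `x = σ₂(A) σ₃(B)`, `y = σ₃(A) σ₂(B)`, and together with `x, y ≤ σ₂(AB)` the
inequality `(σ₂(AB) - x)(σ₂(AB) - y) ≥ 0` rearranges to `x + y ≤ σ₂(AB) + σ₃(AB)`.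
-/

section Gram

variable {m : Type*} [Fintype m]

noncomputable def sqNorm (v : m → ℂ) : ℝ := ∑ i, Complex.normSq (v i)

lemma sqNorm_nonneg (v : m → ℂ) : 0 ≤ sqNorm v :=
  Finset.sum_nonneg fun _ _ => Complex.normSq_nonneg _

lemma sqNorm_pos {v : m → ℂ} (hv : v ≠ 0) : 0 < sqNorm v := by
  obtain ⟨i, hi⟩ := Function.ne_iff.mp hv
  exact Finset.sum_pos' (fun j _ => Complex.normSq_nonneg _)
    ⟨i, Finset.mem_univ i, Complex.normSq_pos.mpr hi⟩

lemma ofReal_sqNorm (v : m → ℂ) : (sqNorm v : ℂ) = star v ⬝ᵥ v := by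
  simp only [sqNorm, dotProduct, Pi.star_apply, Complex.ofReal_sum, Complex.star_def,
    Complex.normSq_eq_conj_mul_self]

variable [DecidableEq m]

lemma sqNorm_single_one (i : m) : sqNorm (Pi.single i (1 : ℂ)) = 1 := by
  simp [sqNorm, Pi.single_apply]

lemma sqNorm_unitary_mulVec {V : Matrix m m ℂ} (hV : V ∈ unitaryGroup m ℂ) (v : m → ℂ) :
    sqNorm (V *ᵥ v) = sqNorm v := by
  exact_mod_cast show (sqNorm (V *ᵥ v) : ℂ) = sqNorm v by
    rw [ofReal_sqNorm, ofReal_sqNorm, star_mulVec, dotProduct_mulVec, vecMul_vecMul,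
      ← star_eq_conjTranspose, Unitary.star_mul_self_of_mem hV, vecMul_one]

lemma sqNorm_conjTranspose_mulVec {V : Matrix m m ℂ} (hV : V ∈ unitaryGroup m ℂ)
    (v : m → ℂ) : sqNorm (Vᴴ *ᵥ v) = sqNorm v :=
  sqNorm_unitary_mulVec (Unitary.star_mem hV) v

structure DiagonalizesGram (M V : Matrix m m ℂ) (μ : m → ℝ) : Prop where
  unitary : V ∈ unitaryGroup m ℂ
  gram_eq : Mᴴ * M = V * diagonal (fun i => (μ i : ℂ)) * Vᴴ

namespace DiagonalizesGram

variable {M V : Matrix m m ℂ} {μ : m → ℝ}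

lemma of_isHermitian (hH : (Mᴴ * M).IsHermitian) :
    DiagonalizesGram M hH.eigenvectorUnitary hH.eigenvalues where
  unitary := hH.eigenvectorUnitary.2
  gram_eq := by
    conv_lhs => rw [hH.spectral_theorem, Unitary.conjStarAlgAut_apply, star_eq_conjTranspose]
    rfl

lemma submatrix_perm (h : DiagonalizesGram M V μ) (σ : Equiv.Perm m) :
    DiagonalizesGram M (V.submatrix id σ) (μ ∘ σ) where
  unitary := by
    rw [mem_unitaryGroup_iff', star_eq_conjTranspose, conjTranspose_submatrix,
      ← submatrix_mul _ _ _ _ _ Function.bijective_id, ← star_eq_conjTranspose,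
      Unitary.star_mul_self_of_mem h.unitary, submatrix_one_equiv]
  gram_eq := by
    have hdiag : diagonal (fun i => ((μ ∘ σ) i : ℂ)) =
        (diagonal fun i => (μ i : ℂ)).submatrix σ σ :=
      (submatrix_diagonal_equiv (fun i => (μ i : ℂ)) σ).symm
    rw [h.gram_eq, conjTranspose_submatrix, hdiag, submatrix_mul_equiv, submatrix_mul_equiv,
      submatrix_id_id]

lemma sqNorm_mulVec (h : DiagonalizesGram M V μ) (x : m → ℂ) :
    sqNorm (M *ᵥ x) = ∑ i, μ i * Complex.normSq ((Vᴴ *ᵥ x) i) := by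
  have hquad : star (M *ᵥ x) ⬝ᵥ (M *ᵥ x) =
      star (Vᴴ *ᵥ x) ⬝ᵥ (diagonal (fun i => (μ i : ℂ)) *ᵥ (Vᴴ *ᵥ x)) := by
    rw [star_mulVec, dotProduct_mulVec, vecMul_vecMul, h.gram_eq, star_mulVec,
      conjTranspose_conjTranspose, dotProduct_mulVec, dotProduct_mulVec, vecMul_vecMul,
      Matrix.mul_assoc, vecMul_vecMul]
  exact_mod_cast show (sqNorm (M *ᵥ x) : ℂ) =
      ((∑ i, μ i * Complex.normSq ((Vᴴ *ᵥ x) i) : ℝ) : ℂ) by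
    rw [ofReal_sqNorm, hquad]
    simp only [dotProduct, mulVec_diagonal, Pi.star_apply, Complex.ofReal_sum,
      Complex.ofReal_mul, Complex.star_def, Complex.normSq_eq_conj_mul_self]
    exact Finset.sum_congr rfl fun i _ => by ring

lemma sqNorm_mulVec_le_of_support (h : DiagonalizesGram M V μ) {x : m → ℂ} {c : ℝ}
    (hc : ∀ i, (Vᴴ *ᵥ x) i ≠ 0 → μ i ≤ c) : sqNorm (M *ᵥ x) ≤ c * sqNorm x := by
  rw [h.sqNorm_mulVec, ← sqNorm_conjTranspose_mulVec h.unitary x, sqNorm, Finset.mul_sum]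
  refine Finset.sum_le_sum fun i _ => ?_
  by_cases hi : (Vᴴ *ᵥ x) i = 0
  · simp [hi]
  · exact mul_le_mul_of_nonneg_right (hc i hi) (Complex.normSq_nonneg _)

lemma le_sqNorm_mulVec_of_support (h : DiagonalizesGram M V μ) {x : m → ℂ} {c : ℝ}
    (hc : ∀ i, (Vᴴ *ᵥ x) i ≠ 0 → c ≤ μ i) : c * sqNorm x ≤ sqNorm (M *ᵥ x) := by
  rw [h.sqNorm_mulVec, ← sqNorm_conjTranspose_mulVec h.unitary x, sqNorm, Finset.mul_sum]
  refine Finset.sum_le_sum fun i _ => ?_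
  by_cases hi : (Vᴴ *ᵥ x) i = 0
  · simp [hi]
  · exact mul_le_mul_of_nonneg_right (hc i hi) (Complex.normSq_nonneg _)

lemma sqNorm_mulVec_col (h : DiagonalizesGram M V μ) (i : m) :
    sqNorm (M *ᵥ (V *ᵥ Pi.single i 1)) = μ i := by
  rw [h.sqNorm_mulVec, mulVec_mulVec, ← star_eq_conjTranspose,
    Unitary.star_mul_self_of_mem h.unitary, one_mulVec]
  simp [Pi.single_apply]

lemma nonneg (h : DiagonalizesGram M V μ) (i : m) : 0 ≤ μ i :=
  h.sqNorm_mulVec_col i ▸ sqNorm_nonneg _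

lemma det_gram (h : DiagonalizesGram M V μ) : det (Mᴴ * M) = ∏ i, (μ i : ℂ) := by
  rw [h.gram_eq, det_mul, det_mul, det_diagonal, mul_comm, ← mul_assoc, ← det_mul,
    ← star_eq_conjTranspose, Unitary.star_mul_self_of_mem h.unitary, det_one, one_mul]

end DiagonalizesGram

variable {A B VA VB VC : Matrix m m ℂ} {μA μB μC : m → ℝ}

lemma gramEigenvalue_mul_le_mul (hA : DiagonalizesGram A VA μA) (hB : DiagonalizesGram B VB μB)
    (hC : DiagonalizesGram (A * B) VC μC) {a b : ℝ} (ha₀ : 0 ≤ a) (ha : ∀ i, μA i ≤ a)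
    (hb : ∀ i, μB i ≤ b) (i : m) : μC i ≤ a * b := by
  set x := VC *ᵥ Pi.single i 1
  calc μC i = sqNorm (A *ᵥ (B *ᵥ x)) := by rw [mulVec_mulVec, hC.sqNorm_mulVec_col]
    _ ≤ a * sqNorm (B *ᵥ x) := hA.sqNorm_mulVec_le_of_support fun i _ => ha i
    _ ≤ a * (b * sqNorm x) :=
      mul_le_mul_of_nonneg_left (hB.sqNorm_mulVec_le_of_support fun i _ => hb i) ha₀
    _ = a * b := by rw [sqNorm_unitary_mulVec hC.unitary, sqNorm_single_one, mul_one]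

lemma prod_gramEigenvalue_mul (hA : DiagonalizesGram A VA μA) (hB : DiagonalizesGram B VB μB)
    (hC : DiagonalizesGram (A * B) VC μC) : ∏ i, μC i = (∏ i, μA i) * ∏ i, μB i := by
  have hdet : det ((A * B)ᴴ * (A * B)) = det (Aᴴ * A) * det (Bᴴ * B) := by
    simp only [conjTranspose_mul, det_mul]
    ring
  rw [hA.det_gram, hB.det_gram, hC.det_gram] at hdet
  exact_mod_cast hdet

end Gram

section MinMax

open Module Finset

/-- For `U = Vᴴ` with `V` unitary, this is the span of the columns of `V` outside `s`. -/
def coordKer {ι m : Type*} [Fintype m] (U : Matrix ι m ℂ) (s : Finset ι) :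
    Submodule ℂ (m → ℂ) :=
  LinearMap.ker ((LinearMap.pi fun i : s => LinearMap.proj (i : ι)) ∘ₗ U.mulVecLin)

lemma mem_coordKer {ι m : Type*} [Fintype m] {U : Matrix ι m ℂ} {s : Finset ι} {x : m → ℂ} :
    x ∈ coordKer U s ↔ ∀ i ∈ s, (U *ᵥ x) i = 0 := by
  simp [coordKer, funext_iff]

lemma card_sub_card_le_finrank_coordKer {ι m : Type*} [Fintype m] (U : Matrix ι m ℂ)
    (s : Finset ι) : Fintype.card m - s.card ≤ finrank ℂ (coordKer U s) := by
  have hrange := Submodule.finrank_le (LinearMap.range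
    ((LinearMap.pi fun i : s => LinearMap.proj (i : ι)) ∘ₗ U.mulVecLin))
  have hnullity := LinearMap.finrank_range_add_finrank_ker
    ((LinearMap.pi fun i : s => LinearMap.proj (i : ι)) ∘ₗ U.mulVecLin)
  simp only [finrank_fintype_fun_eq_card, Fintype.card_coe] at hrange hnullity
  unfold coordKer
  omega

variable {n : ℕ}

/-- Courant–Fischer: `W` meets the span of the eigenvectors with index `≥ j` nontrivially. -/
lemma DiagonalizesGram.le_of_le_sqNorm_mulVec_on {M V : Matrix (Fin n) (Fin n) ℂ}
    {μ : Fin n → ℝ} (h : DiagonalizesGram M V μ) (hμ : Antitone μ) {j : Fin n}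
    {W : Submodule ℂ (Fin n → ℂ)} (hW : (j : ℕ) < finrank ℂ W) {k : ℝ}
    (hk : ∀ x ∈ W, k * sqNorm x ≤ sqNorm (M *ᵥ x)) : k ≤ μ j := by
  let f : W →ₗ[ℂ] (Iio j → ℂ) :=
    (LinearMap.pi fun i : Iio j => LinearMap.proj (i : Fin n)) ∘ₗ Vᴴ.mulVecLin ∘ₗ W.subtype
  have hdim : finrank ℂ (Iio j → ℂ) < finrank ℂ W := by
    rwa [finrank_fintype_fun_eq_card, Fintype.card_coe, Fin.card_Iio]
  obtain ⟨⟨x, hxW⟩, hfx, hx0⟩ :=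
    Submodule.exists_mem_ne_zero_of_ne_bot (LinearMap.ker_ne_bot_of_finrank_lt (f := f) hdim)
  have hxj : ∀ i, (Vᴴ *ᵥ x) i ≠ 0 → μ i ≤ μ j := fun i hi =>
    hμ (not_lt.mp fun hij => hi (congrFun hfx ⟨i, mem_Iio.mpr hij⟩))
  have hpos : 0 < sqNorm x := sqNorm_pos fun h0 => hx0 (Subtype.ext h0)
  exact le_of_mul_le_mul_right ((hk x hxW).trans (h.sqNorm_mulVec_le_of_support hxj)) hpos

lemma DiagonalizesGram.le_of_le_sqNorm_mulVec_on_coordKer {M V : Matrix (Fin n) (Fin n) ℂ}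
    {μ : Fin n → ℝ} (h : DiagonalizesGram M V μ) (hμ : Antitone μ) (j : Fin n)
    (U : Matrix (Fin n) (Fin n) ℂ) {k : ℝ}
    (hk : ∀ x ∈ coordKer U (Ioi j), k * sqNorm x ≤ sqNorm (M *ᵥ x)) : k ≤ μ j := by
  refine h.le_of_le_sqNorm_mulVec_on hμ ?_ hk
  have := card_sub_card_le_finrank_coordKer U (Ioi j)
  rw [Fintype.card_fin, Fin.card_Ioi] at this
  omega

variable {A B VA VB VC : Matrix (Fin n) (Fin n) ℂ} {μA μB μC : Fin n → ℝ}

lemma mul_le_gramEigenvalue_mul_left (hA : DiagonalizesGram A VA μA)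
    (hB : DiagonalizesGram B VB μB) (hC : DiagonalizesGram (A * B) VC μC) (hμB : Antitone μB)
    (hμC : Antitone μC) {a : ℝ} (ha₀ : 0 ≤ a) (ha : ∀ i, a ≤ μA i) (j : Fin n) :
    a * μB j ≤ μC j := by
  refine hC.le_of_le_sqNorm_mulVec_on_coordKer hμC j VBᴴ fun x hx => ?_
  have hBx : μB j * sqNorm x ≤ sqNorm (B *ᵥ x) :=
    hB.le_sqNorm_mulVec_of_support fun i hi =>
      hμB (not_lt.mp fun hji => hi (mem_coordKer.mp hx i (mem_Ioi.mpr hji)))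
  calc a * μB j * sqNorm x ≤ a * sqNorm (B *ᵥ x) := by
        rw [mul_assoc]; exact mul_le_mul_of_nonneg_left hBx ha₀
    _ ≤ sqNorm (A *ᵥ (B *ᵥ x)) := hA.le_sqNorm_mulVec_of_support fun i _ => ha i
    _ = sqNorm ((A * B) *ᵥ x) := by rw [mulVec_mulVec]

lemma mul_le_gramEigenvalue_mul_right (hA : DiagonalizesGram A VA μA)
    (hB : DiagonalizesGram B VB μB) (hC : DiagonalizesGram (A * B) VC μC) (hμA : Antitone μA)
    (hμC : Antitone μC) {b : ℝ} (hb : ∀ i, b ≤ μB i) (j : Fin n) :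
    μA j * b ≤ μC j := by
  refine hC.le_of_le_sqNorm_mulVec_on_coordKer hμC j (VAᴴ * B) fun x hx => ?_
  have hABx : μA j * sqNorm (B *ᵥ x) ≤ sqNorm (A *ᵥ (B *ᵥ x)) :=
    hA.le_sqNorm_mulVec_of_support fun i hi => hμA (not_lt.mp fun hji =>
      hi (by simpa [mulVec_mulVec] using mem_coordKer.mp hx i (mem_Ioi.mpr hji)))
  calc μA j * b * sqNorm x ≤ μA j * sqNorm (B *ᵥ x) := by
        rw [mul_assoc]
        exact mul_le_mul_of_nonneg_left (hB.le_sqNorm_mulVec_of_support fun i _ => hb i)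
          (hA.nonneg j)
    _ ≤ sqNorm (A *ᵥ (B *ᵥ x)) := hABx
    _ = sqNorm ((A * B) *ᵥ x) := by rw [mulVec_mulVec]

end MinMax

namespace IsSingularValues

variable {M : Matrix (Fin 3) (Fin 3) ℂ} {s : Fin 3 → ℝ}

lemma nonneg (h : IsSingularValues M s) (i : Fin 3) : 0 ≤ s i := by
  obtain ⟨-, σ, hs⟩ := h
  exact hs i ▸ Real.sqrt_nonneg _

lemma antitone_sq (h : IsSingularValues M s) : Antitone fun i => s i ^ 2 :=
  fun i j hij => pow_le_pow_left₀ (h.nonneg j) (h.1 i j hij) 2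

lemma exists_diagonalizesGram (h : IsSingularValues M s) :
    ∃ V, DiagonalizesGram M V (fun i => s i ^ 2) := by
  obtain ⟨-, σ, hs⟩ := h
  have hpsd := posSemidef_conjTranspose_mul_self M
  have hμ : hpsd.1.eigenvalues ∘ σ = fun i => s i ^ 2 :=
    funext fun i => by rw [hs, Function.comp_apply, Real.sq_sqrt (hpsd.eigenvalues_nonneg _)]
  exact ⟨_, hμ ▸ (DiagonalizesGram.of_isHermitian hpsd.1).submatrix_perm σ⟩

end IsSingularValues

lemma add_le_add_of_mul_le_mul {x y c d c₀ p : ℝ} (hc : 0 ≤ c) (hd : 0 ≤ d) (hcc₀ : c ≤ c₀)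
    (hc₀p : c₀ ≤ p) (hx : x ≤ c) (hy : y ≤ c) (hprod : p * (x * y) ≤ c₀ * (c * d)) :
    x + y ≤ c + d := by
  rcases hc.eq_or_lt with rfl | hc_pos
  · linarith
  have hxy : x * y ≤ c * d := by
    refine le_of_mul_le_mul_left (hprod.trans ?_) (hc_pos.trans_le (hcc₀.trans hc₀p))
    exact mul_le_mul_of_nonneg_right hc₀p (mul_nonneg hc hd)
  nlinarith [mul_nonneg (sub_nonneg.mpr hx) (sub_nonneg.mpr hy)]

theorem stmt9 (A B : Matrix (Fin 3) (Fin 3) ℂ) (sA sB sAB : Fin 3 → ℝ)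
    (hA : IsSingularValues A sA) (hB : IsSingularValues B sB)
    (hAB : IsSingularValues (A * B) sAB) :
    sA 1 * sB 2 + sA 2 * sB 1 ≤ sAB 1 + sAB 2 := by
  obtain ⟨VA, hVA⟩ := hA.exists_diagonalizesGram
  obtain ⟨VB, hVB⟩ := hB.exists_diagonalizesGram
  obtain ⟨VC, hVC⟩ := hAB.exists_diagonalizesGram
  have h0 : sAB 0 ≤ sA 0 * sB 0 := by
    refine le_of_sq_le_sq ?_ (mul_nonneg (hA.nonneg 0) (hB.nonneg 0))
    rw [mul_pow]
    exact gramEigenvalue_mul_le_mul hVA hVB hVC (sq_nonneg _)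
      (fun i => hA.antitone_sq (Fin.zero_le i)) (fun i => hB.antitone_sq (Fin.zero_le i)) 0
  have h1 : sA 1 * sB 2 ≤ sAB 1 := by
    refine le_of_sq_le_sq ?_ (hAB.nonneg 1)
    rw [mul_pow]
    exact mul_le_gramEigenvalue_mul_right hVA hVB hVC hA.antitone_sq hAB.antitone_sq
      (fun i => hB.antitone_sq (Fin.le_last i)) 1
  have h2 : sA 2 * sB 1 ≤ sAB 1 := by
    refine le_of_sq_le_sq ?_ (hAB.nonneg 1)
    rw [mul_pow]
    exact mul_le_gramEigenvalue_mul_left hVA hVB hVC hB.antitone_sq hAB.antitone_sq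
      (sq_nonneg _) (fun i => hA.antitone_sq (Fin.le_last i)) 1
  have hdet := prod_gramEigenvalue_mul hVA hVB hVC
  simp only [Fin.prod_univ_three] at hdet
  refine add_le_add_of_mul_le_mul (hAB.nonneg 1) (hAB.nonneg 2) (hAB.1 0 1 (by decide)) h0 h1 h2
    (le_of_sq_le_sq (le_of_eq ?_) ?_)
  · linear_combination -hdet
  · exact mul_nonneg (hAB.nonneg 0) (mul_nonneg (hAB.nonneg 1) (hAB.nonneg 2))
end

section
/- Let λ_1 ≥ λ_2 ≥ ... ≥ λ_6 ≥ 0 be real numbers and suppose the matrix Λ_1 = [[2λ_6, λ_2, λ_1],[λ_2, 2λ_3, λ_4],[λ_1, λ_4, 2λ_5]] is positive semidefinite. Then the matrices Λ_2 = [[2λ_6, λ_4, λ_1],[λ_4, 2λ_3, λ_2],[λ_1, λ_2, 2λ_5]], Λ_3 = [[2λ_6, λ_5, λ_1],[λ_5, 2λ_3, λ_2],[λ_1, λ_2, 2λ_4]], and Λ_4 = [[2λ_6, λ_5, λ_1],[λ_5, 2λ_4, λ_2],[λ_1, λ_2, 2λ_3]] are also positive semidefinite. -/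
/-!
A real symmetric `3 × 3` matrix is positive semidefinite once its diagonal entries, its
principal `2 × 2` minors and its determinant are nonnegative: completing the square in the
first variable leaves a binary form whose discriminant is the first diagonal entry times the
determinant. For `Λ₂, Λ₃, Λ₄` every principal `2 × 2` minor dominates the minor
`4 λ₆ λ₅ - λ₁²` of `Λ₁`, and `det Λ₁ ≤ det Λ₂ ≤ det Λ₃ ≤ det Λ₄` since each difference factors
into nonnegative terms of the sorted sequence.
-/

open Matrix

section OrderedRing

variable {R : Type*} [CommRing R] [LinearOrder R] [IsStrictOrderedRing R]

theorem binary_form_nonneg {p q r : R} (hp : 0 ≤ p) (hr : 0 ≤ r) (hq : q ^ 2 ≤ p * r) (y z : R) :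
    0 ≤ p * y ^ 2 + 2 * q * y * z + r * z ^ 2 := by
  rcases hp.eq_or_lt with rfl | hp
  · obtain rfl : q = 0 := by simpa using hq
    simpa using mul_nonneg hr (sq_nonneg z)
  · refine nonneg_of_mul_nonneg_right ?_ hp
    have hsq : p * (p * y ^ 2 + 2 * q * y * z + r * z ^ 2) =
        (p * y + q * z) ^ 2 + (p * r - q ^ 2) * z ^ 2 := by ring
    rw [hsq]
    have := sub_nonneg.2 hq
    positivity

theorem ternary_form_nonneg {a b c d e f : R} (ha : 0 ≤ a) (hd : 0 ≤ d) (hf : 0 ≤ f)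
    (hb : b ^ 2 ≤ a * d) (hc : c ^ 2 ≤ a * f) (he : e ^ 2 ≤ d * f)
    (hdet : 0 ≤ a * d * f + 2 * b * c * e - a * e ^ 2 - f * b ^ 2 - d * c ^ 2) (x y z : R) :
    0 ≤ a * x ^ 2 + d * y ^ 2 + f * z ^ 2 + 2 * b * x * y + 2 * c * x * z + 2 * e * y * z := by
  rcases ha.eq_or_lt with rfl | ha
  · obtain rfl : b = 0 := by simpa using hb
    obtain rfl : c = 0 := by simpa using hc
    simpa [add_right_comm] using binary_form_nonneg hd hf he y z
  · refine nonneg_of_mul_nonneg_right ?_ ha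
    have hsq : a * (a * x ^ 2 + d * y ^ 2 + f * z ^ 2 + 2 * b * x * y + 2 * c * x * z
        + 2 * e * y * z) = (a * x + b * y + c * z) ^ 2
          + ((a * d - b ^ 2) * y ^ 2 + 2 * (a * e - b * c) * y * z + (a * f - c ^ 2) * z ^ 2) := by
      ring
    have hdisc : (a * e - b * c) ^ 2 ≤ (a * d - b ^ 2) * (a * f - c ^ 2) := by
      rw [← sub_nonneg]
      convert mul_nonneg ha.le hdet using 1
      ring
    rw [hsq]
    exact add_nonneg (sq_nonneg _)
      (binary_form_nonneg (sub_nonneg.2 hb) (sub_nonneg.2 hc) hdisc y z)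

end OrderedRing

theorem Matrix.det_fin_three_symm {R : Type*} [CommRing R] (a b c d e f : R) :
    (!![a, b, c; b, d, e; c, e, f] : Matrix (Fin 3) (Fin 3) R).det =
      a * d * f + 2 * b * c * e - a * e ^ 2 - f * b ^ 2 - d * c ^ 2 := by
  rw [det_fin_three]
  simp only [of_apply, cons_val', cons_val_zero, cons_val_fin_one, cons_val_one, cons_val]
  ring

theorem Matrix.posSemidef_fin_three_of_minors {a b c d e f : ℝ} (ha : 0 ≤ a) (hd : 0 ≤ d)
    (hf : 0 ≤ f) (hb : b ^ 2 ≤ a * d) (hc : c ^ 2 ≤ a * f) (he : e ^ 2 ≤ d * f)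
    (hdet : 0 ≤ (!![a, b, c; b, d, e; c, e, f] : Matrix (Fin 3) (Fin 3) ℝ).det) :
    (!![a, b, c; b, d, e; c, e, f] : Matrix (Fin 3) (Fin 3) ℝ).PosSemidef := by
  rw [det_fin_three_symm] at hdet
  refine PosSemidef.of_dotProduct_mulVec_nonneg ?_ fun x ↦ ?_
  · ext i j
    fin_cases i <;> fin_cases j <;> rfl
  · refine (ternary_form_nonneg ha hd hf hb hc he hdet (x 0) (x 1) (x 2)).trans_eq ?_
    simp only [dotProduct, Pi.star_apply, star_trivial, mulVec, of_apply, cons_val',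
      cons_val_fin_one, Fin.sum_univ_three, cons_val_zero, cons_val_one, cons_val]
    ring

theorem Matrix.PosSemidef.sq_le_mul_diag {n : Type*}
    {M : Matrix n n ℝ} (hM : M.PosSemidef) (i j : n) : M i j ^ 2 ≤ M i i * M j j := by
  have h := (hM.submatrix ![i, j]).det_nonneg
  rw [det_fin_two, sub_nonneg] at h
  simpa [sq, ← hM.isHermitian.apply j i] using h

section Sorted

variable {lam : Fin 6 → ℝ}

-- The paper's matrices, with `lam i` in place of `λ_(i+1)`.
def Λ₁ (lam : Fin 6 → ℝ) : Matrix (Fin 3) (Fin 3) ℝ :=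
  !![2 * lam 5, lam 1, lam 0; lam 1, 2 * lam 2, lam 3; lam 0, lam 3, 2 * lam 4]

def Λ₂ (lam : Fin 6 → ℝ) : Matrix (Fin 3) (Fin 3) ℝ :=
  !![2 * lam 5, lam 3, lam 0; lam 3, 2 * lam 2, lam 1; lam 0, lam 1, 2 * lam 4]

def Λ₃ (lam : Fin 6 → ℝ) : Matrix (Fin 3) (Fin 3) ℝ :=
  !![2 * lam 5, lam 4, lam 0; lam 4, 2 * lam 2, lam 1; lam 0, lam 1, 2 * lam 3]

def Λ₄ (lam : Fin 6 → ℝ) : Matrix (Fin 3) (Fin 3) ℝ :=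
  !![2 * lam 5, lam 4, lam 0; lam 4, 2 * lam 3, lam 1; lam 0, lam 1, 2 * lam 2]

theorem nonneg_of_antitone (hlam : Antitone lam) (h5 : 0 ≤ lam 5) (i : Fin 6) : 0 ≤ lam i :=
  h5.trans (hlam (Fin.le_last i))

theorem sq_le_of_antitone (hlam : Antitone lam) (h5 : 0 ≤ lam 5)
    (hcorner : lam 0 ^ 2 ≤ 2 * lam 5 * (2 * lam 4)) (i : Fin 6) {j k : Fin 6} (hjk : j ≠ k) :
    lam i ^ 2 ≤ 2 * lam j * (2 * lam k) := by
  wlog hlt : j < k generalizing j k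
  · rw [mul_comm]
    exact this hjk.symm (hjk.lt_or_gt.resolve_left hlt)
  have hj : lam 4 ≤ lam j := hlam (by omega)
  have hk : lam 5 ≤ lam k := hlam (Fin.le_last k)
  calc lam i ^ 2 ≤ lam 0 ^ 2 := by
        gcongr
        · exact nonneg_of_antitone hlam h5 i
        · exact hlam (Fin.zero_le i)
    _ ≤ 2 * lam 5 * (2 * lam 4) := hcorner
    _ ≤ 2 * lam j * (2 * lam k) := by
        linarith [mul_le_mul hj hk h5 (nonneg_of_antitone hlam h5 j)]

theorem posSemidef_of_antitone_of_det_nonneg (hlam : Antitone lam) (h5 : 0 ≤ lam 5)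
    (hcorner : lam 0 ^ 2 ≤ 2 * lam 5 * (2 * lam 4)) {a d f : Fin 6} (b c e : Fin 6)
    (had : a ≠ d) (haf : a ≠ f) (hdf : d ≠ f)
    (hdet : 0 ≤ (!![2 * lam a, lam b, lam c; lam b, 2 * lam d, lam e; lam c, lam e, 2 * lam f] :
      Matrix (Fin 3) (Fin 3) ℝ).det) :
    (!![2 * lam a, lam b, lam c; lam b, 2 * lam d, lam e; lam c, lam e, 2 * lam f] :
      Matrix (Fin 3) (Fin 3) ℝ).PosSemidef := by
  have hdiag (i : Fin 6) : 0 ≤ 2 * lam i := by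
    have := nonneg_of_antitone hlam h5 i
    positivity
  exact posSemidef_fin_three_of_minors (hdiag a) (hdiag d) (hdiag f)
    (sq_le_of_antitone hlam h5 hcorner b had) (sq_le_of_antitone hlam h5 hcorner c haf)
    (sq_le_of_antitone hlam h5 hcorner e hdf) hdet

theorem det_Λ₁_le_det_Λ₂ (hlam : Antitone lam) (h5 : 0 ≤ lam 5) :
    (Λ₁ lam).det ≤ (Λ₂ lam).det := by
  have hdiff : (Λ₂ lam).det - (Λ₁ lam).det = 2 * (lam 4 - lam 5) * (lam 1 ^ 2 - lam 3 ^ 2) := by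
    simp only [Λ₁, Λ₂, det_fin_three_symm]
    ring
  have h45 := sub_nonneg.2 (hlam (show (4 : Fin 6) ≤ 5 by decide))
  have h13 := sub_nonneg.2 (pow_le_pow_left₀ (nonneg_of_antitone hlam h5 3)
    (hlam (show (1 : Fin 6) ≤ 3 by decide)) 2)
  rw [← sub_nonneg, hdiff]
  positivity

theorem det_Λ₂_le_det_Λ₃ (hlam : Antitone lam) (h5 : 0 ≤ lam 5)
    (hcorner : lam 0 ^ 2 ≤ 2 * lam 5 * (2 * lam 4)) :
    (Λ₂ lam).det ≤ (Λ₃ lam).det := by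
  have hdiff : (Λ₃ lam).det - (Λ₂ lam).det =
      2 * (4 * lam 2 * lam 5 + lam 3 * lam 4 - lam 0 * lam 1) * (lam 3 - lam 4) := by
    simp only [Λ₂, Λ₃, det_fin_three_symm]
    ring
  have hfactor : 0 ≤ 4 * lam 2 * lam 5 + lam 3 * lam 4 - lam 0 * lam 1 := by
    have h01 : lam 0 * lam 1 ≤ lam 0 ^ 2 := by
      rw [sq]
      exact mul_le_mul_of_nonneg_left (hlam (Fin.zero_le 1)) (nonneg_of_antitone hlam h5 0)
    have h0 := sq_le_of_antitone hlam h5 hcorner 0 (show (5 : Fin 6) ≠ 2 by decide)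
    have h34 := mul_nonneg (nonneg_of_antitone hlam h5 3) (nonneg_of_antitone hlam h5 4)
    linarith
  have h34 := sub_nonneg.2 (hlam (show (3 : Fin 6) ≤ 4 by decide))
  rw [← sub_nonneg, hdiff]
  positivity

theorem det_Λ₃_le_det_Λ₄ (hlam : Antitone lam) (h5 : 0 ≤ lam 5) :
    (Λ₃ lam).det ≤ (Λ₄ lam).det := by
  have hdiff : (Λ₄ lam).det - (Λ₃ lam).det = 2 * (lam 0 ^ 2 - lam 4 ^ 2) * (lam 2 - lam 3) := by
    simp only [Λ₃, Λ₄, det_fin_three_symm]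
    ring
  have h04 := sub_nonneg.2 (pow_le_pow_left₀ (nonneg_of_antitone hlam h5 4)
    (hlam (show (0 : Fin 6) ≤ 4 by decide)) 2)
  have h23 := sub_nonneg.2 (hlam (show (2 : Fin 6) ≤ 3 by decide))
  rw [← sub_nonneg, hdiff]
  positivity

end Sorted

theorem stmt10 (lam : Fin 6 → ℝ)
    (hsort : ∀ i j : Fin 6, i ≤ j → lam j ≤ lam i) (hnonneg : 0 ≤ lam 5)
    (h1 : (!![2 * lam 5, lam 1, lam 0;
              lam 1, 2 * lam 2, lam 3;
              lam 0, lam 3, 2 * lam 4] : Matrix (Fin 3) (Fin 3) ℝ).PosSemidef) :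
    (!![2 * lam 5, lam 3, lam 0;
        lam 3, 2 * lam 2, lam 1;
        lam 0, lam 1, 2 * lam 4] : Matrix (Fin 3) (Fin 3) ℝ).PosSemidef ∧
    (!![2 * lam 5, lam 4, lam 0;
        lam 4, 2 * lam 2, lam 1;
        lam 0, lam 1, 2 * lam 3] : Matrix (Fin 3) (Fin 3) ℝ).PosSemidef ∧
    (!![2 * lam 5, lam 4, lam 0;
        lam 4, 2 * lam 3, lam 1;
        lam 0, lam 1, 2 * lam 2] : Matrix (Fin 3) (Fin 3) ℝ).PosSemidef := by
  have hlam : Antitone lam := fun i j hij ↦ hsort i j hij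
  have hcorner : lam 0 ^ 2 ≤ 2 * lam 5 * (2 * lam 4) := by simpa using h1.sq_le_mul_diag 0 2
  have hdet₂ : 0 ≤ (Λ₂ lam).det := h1.det_nonneg.trans (det_Λ₁_le_det_Λ₂ hlam hnonneg)
  have hdet₃ : 0 ≤ (Λ₃ lam).det := hdet₂.trans (det_Λ₂_le_det_Λ₃ hlam hnonneg hcorner)
  have hdet₄ : 0 ≤ (Λ₄ lam).det := hdet₃.trans (det_Λ₃_le_det_Λ₄ hlam hnonneg)
  exact ⟨posSemidef_of_antitone_of_det_nonneg hlam hnonneg hcorner 3 0 1 (by decide) (by decide)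
      (by decide) hdet₂,
    posSemidef_of_antitone_of_det_nonneg hlam hnonneg hcorner 4 0 1 (by decide) (by decide)
      (by decide) hdet₃,
    posSemidef_of_antitone_of_det_nonneg hlam hnonneg hcorner 4 0 1 (by decide) (by decide)
      (by decide) hdet₄⟩
end

section
/- Let μ_1 ≥ μ_2 ≥ μ_3 be real numbers with μ_2 ≥ 0 and μ_3 ≥ −√(μ_1 μ_2). Define the 4×4 matrix X with x_{1,1} = μ_1, x_{4,4} = μ_2, x_{1,4} = x_{4,1} = μ_3, and all other entries 0. Then X is positive semidefinite, and W = P X^Γ P (where P is the orthogonal projection onto the symmetric subspace of C^2 ⊗ C^2 and Γ is the partial transpose) has eigenvalues μ_1, μ_2, μ_3, 0 with eigenvectors e_1⊗e_1, e_2⊗e_2, e_2⊗e_1 + e_1⊗e_2, e_2⊗e_1 − e_1⊗e_2 respectively. -/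
open Matrix ComplexOrder

/-- Standard basis vector e_a ⊗ e_b of ℂ^2 ⊗ ℂ^2. -/
noncomputable def eTens (a b : Fin 2) : Fin 2 × Fin 2 → ℂ :=
  fun p => if p = (a, b) then 1 else 0

/-!
`X` is the `2 × 2` block `M = !![μ₀, μ₂; μ₂, μ₁]` placed on `span {e₀ ⊗ e₀, e₁ ⊗ e₁}`, so it is positive
semidefinite because `μ₂² ≤ μ₀ μ₁`. Its partial transpose sends `e_a ⊗ e_b` to `M b a • e_b ⊗ e_a`,
so `e_a ⊗ e_a` and `e₁ ⊗ e₀ + e₀ ⊗ e₁` are eigenvectors of `Xᴳ`; they are fixed by the symmetric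
projection `P`, which kills `e₁ ⊗ e₀ - e₀ ⊗ e₁`.
-/

lemma sq_le_mul_of_neg_sqrt_le {a b c : ℝ} (hb : 0 ≤ b) (hba : b ≤ a) (hcb : c ≤ b)
    (hc : -Real.sqrt (a * b) ≤ c) : c ^ 2 ≤ a * b := by
  rcases le_or_gt 0 c with hc0 | hc0
  · nlinarith
  · have hab : 0 ≤ a * b := mul_nonneg (hb.trans hba) hb
    nlinarith [Real.sq_sqrt hab, Real.sqrt_nonneg (a * b)]

lemma Matrix.posSemidef_fin_two_of_sq_le {a b c : ℝ} (ha : 0 ≤ a) (hb : 0 ≤ b)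
    (hc : c ^ 2 ≤ a * b) : (!![(a : ℂ), c; c, b]).PosSemidef := by
  refine posSemidef_iff_dotProduct_mulVec.mpr ⟨?_, fun x => ?_⟩
  · ext i j
    fin_cases i <;> fin_cases j <;> simp
  have hform : star x ⬝ᵥ !![(a : ℂ), c; c, b] *ᵥ x =
      ((a * ((x 0).re ^ 2 + (x 0).im ^ 2) + b * ((x 1).re ^ 2 + (x 1).im ^ 2) +
        2 * c * ((x 0).re * (x 1).re + (x 0).im * (x 1).im) : ℝ) : ℂ) := by
    rw [Complex.ext_iff, Complex.ofReal_re, Complex.ofReal_im]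
    simp only [dotProduct, Pi.star_apply, RCLike.star_def, mulVec, of_apply, cons_val',
      cons_val_fin_one, Fin.sum_univ_two, Fin.isValue, cons_val_zero, cons_val_one, Complex.add_re,
      Complex.mul_re, Complex.conj_re, Complex.ofReal_re, Complex.ofReal_im, zero_mul, sub_zero,
      Complex.conj_im, Complex.add_im, Complex.mul_im, add_zero, neg_mul, sub_neg_eq_add]
    constructor <;> ring
  rw [hform, Complex.zero_le_real]
  rcases ha.eq_or_lt with rfl | ha
  · obtain rfl : c = 0 := by nlinarith
    nlinarith
  -- `a` times the form is `|a x₀ + c x₁|² + (a b - c²) |x₁|²`.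
  refine nonneg_of_mul_nonneg_right ?_ ha
  nlinarith [sq_nonneg (a * (x 0).re + c * (x 1).re), sq_nonneg (a * (x 0).im + c * (x 1).im)]

lemma Matrix.mul_mul_mulVec_eq_smul {n R : Type*} [Fintype n] [CommSemiring R]
    {P A : Matrix n n R} {v : n → R} {c : R} (hP : P *ᵥ v = v) (hA : A *ᵥ v = c • v) :
    (P * A * P) *ᵥ v = c • v := by
  rw [← mulVec_mulVec, hP, ← mulVec_mulVec, hA, mulVec_smul, hP]

lemma Matrix.mul_mul_mulVec_eq_zero {n R : Type*} [Fintype n] [Semiring R]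
    {P A : Matrix n n R} {v : n → R} (hP : P *ᵥ v = 0) : (P * A * P) *ᵥ v = 0 := by
  rw [← mulVec_mulVec, hP, mulVec_zero]

section

variable {d : ℕ}

def diagBlock (M : Matrix (Fin d) (Fin d) ℂ) : Matrix (Fin d × Fin d) (Fin d × Fin d) ℂ :=
  fun p q => if p.1 = p.2 ∧ q.1 = q.2 then M p.1 q.1 else 0

def diagEmbedding (d : ℕ) : Matrix (Fin d) (Fin d × Fin d) ℂ :=
  fun i p => if p = (i, i) then 1 else 0

lemma diagBlock_eq_conjTranspose_mul_mul (M : Matrix (Fin d) (Fin d) ℂ) :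
    diagBlock M = (diagEmbedding d)ᴴ * M * diagEmbedding d := by
  ext ⟨i, j⟩ ⟨k, l⟩
  rcases eq_or_ne i j with rfl | hij <;> rcases eq_or_ne k l with rfl | hkl <;>
    simp [diagBlock, diagEmbedding, mul_apply, conjTranspose_apply, Prod.ext_iff, *] <;>
    exact (Finset.sum_eq_zero fun x _ => by grind).symm

lemma Matrix.PosSemidef.diagBlock {M : Matrix (Fin d) (Fin d) ℂ} (hM : M.PosSemidef) :
    (diagBlock M).PosSemidef := by
  rw [diagBlock_eq_conjTranspose_mul_mul]
  exact hM.conjTranspose_mul_mul_same _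

lemma ptrans_diagBlock_mulVec_single (M : Matrix (Fin d) (Fin d) ℂ) (a b : Fin d) :
    ptrans (diagBlock M) *ᵥ Pi.single (a, b) 1 = M b a • Pi.single (b, a) 1 := by
  ext ⟨i, j⟩
  simp only [mulVec_single_one, col_apply, ptrans, diagBlock, Pi.smul_apply, Pi.single_apply,
    Prod.ext_iff, smul_eq_mul]
  aesop

lemma ptrans_diagBlock_mulVec_single_add_single {M : Matrix (Fin d) (Fin d) ℂ} {a b : Fin d}
    (hM : M a b = M b a) :
    ptrans (diagBlock M) *ᵥ (Pi.single (a, b) 1 + Pi.single (b, a) 1) =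
      M a b • (Pi.single (a, b) 1 + Pi.single (b, a) 1) := by
  rw [mulVec_add, ptrans_diagBlock_mulVec_single, ptrans_diagBlock_mulVec_single, hM]
  module

lemma symProj_mulVec_single (a b : Fin d) :
    symProj d *ᵥ Pi.single (a, b) 1 = (2⁻¹ : ℂ) • (Pi.single (a, b) 1 + Pi.single (b, a) 1) := by
  ext ⟨i, j⟩
  simp [symProj, Pi.single_apply, Prod.ext_iff, div_eq_inv_mul]

lemma symProj_mulVec_single_self (a : Fin d) :
    symProj d *ᵥ Pi.single (a, a) 1 = Pi.single (a, a) 1 := by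
  rw [symProj_mulVec_single]
  module

lemma symProj_mulVec_single_add_single (a b : Fin d) :
    symProj d *ᵥ (Pi.single (a, b) 1 + Pi.single (b, a) 1) =
      Pi.single (a, b) 1 + Pi.single (b, a) 1 := by
  rw [mulVec_add, symProj_mulVec_single, symProj_mulVec_single]
  module

lemma symProj_mulVec_single_sub_single (a b : Fin d) :
    symProj d *ᵥ (Pi.single (a, b) 1 - Pi.single (b, a) 1) = 0 := by
  rw [mulVec_sub, symProj_mulVec_single, symProj_mulVec_single]
  module

end

lemma eTens_eq_single (a b : Fin 2) : eTens a b = Pi.single (a, b) 1 := by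
  ext p
  simp [eTens, Pi.single_apply]

theorem stmt12 (μ : Fin 3 → ℝ)
    (hsort : ∀ i j : Fin 3, i ≤ j → μ j ≤ μ i) (h2 : 0 ≤ μ 1)
    (h3 : -Real.sqrt (μ 0 * μ 1) ≤ μ 2)
    (X : Matrix (Fin 2 × Fin 2) (Fin 2 × Fin 2) ℂ)
    (hX : X = fun p q =>
      if p = (0, 0) ∧ q = (0, 0) then ((μ 0 : ℝ) : ℂ)
      else if p = (1, 1) ∧ q = (1, 1) then ((μ 1 : ℝ) : ℂ)
      else if (p = (0, 0) ∧ q = (1, 1)) ∨ (p = (1, 1) ∧ q = (0, 0)) then ((μ 2 : ℝ) : ℂ)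
      else 0)
    (W : Matrix (Fin 2 × Fin 2) (Fin 2 × Fin 2) ℂ)
    (hW : W = symProj 2 * ptrans X * symProj 2) :
    X.PosSemidef ∧
    W.mulVec (eTens 0 0) = ((μ 0 : ℝ) : ℂ) • eTens 0 0 ∧
    W.mulVec (eTens 1 1) = ((μ 1 : ℝ) : ℂ) • eTens 1 1 ∧
    W.mulVec (eTens 1 0 + eTens 0 1) = ((μ 2 : ℝ) : ℂ) • (eTens 1 0 + eTens 0 1) ∧
    W.mulVec (eTens 1 0 - eTens 0 1) = (0 : ℂ) • (eTens 1 0 - eTens 0 1) := by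
  have h10 : μ 1 ≤ μ 0 := hsort 0 1 (by decide)
  have h21 : μ 2 ≤ μ 1 := hsort 1 2 (by decide)
  have hXblock : X = diagBlock !![(μ 0 : ℂ), μ 2; μ 2, μ 1] := by
    subst hX
    ext ⟨i, j⟩ ⟨k, l⟩
    fin_cases i <;> fin_cases j <;> fin_cases k <;> fin_cases l <;> simp [diagBlock]
  subst hXblock hW
  simp only [eTens_eq_single, zero_smul]
  refine ⟨(posSemidef_fin_two_of_sq_le (h2.trans h10) h2
      (sq_le_mul_of_neg_sqrt_le h2 h10 h21 h3)).diagBlock, ?_, ?_, ?_, ?_⟩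
  · exact mul_mul_mulVec_eq_smul (symProj_mulVec_single_self 0)
      (ptrans_diagBlock_mulVec_single _ 0 0)
  · exact mul_mul_mulVec_eq_smul (symProj_mulVec_single_self 1)
      (ptrans_diagBlock_mulVec_single _ 1 1)
  · exact mul_mul_mulVec_eq_smul (symProj_mulVec_single_add_single 1 0)
      (ptrans_diagBlock_mulVec_single_add_single rfl)
  · exact mul_mul_mulVec_eq_zero (symProj_mulVec_single_sub_single 1 0)
end

section
/- Let W be a Hermitian operator on the symmetric subspace of C^2 ⊗ C^2 with eigenvalues μ_1 ≥ μ_2 ≥ μ_3, and suppose Tr(Wρ) ≥ 0 for every symmetric quantum state ρ whose eigenvalues λ_1 ≥ λ_2 ≥ λ_3 ≥ 0 satisfy λ_1 ≤ 2√(λ_2 λ_3). Then μ_3 ≥ −μ_1/4 − μ_2 if μ_2 < μ_1/4, and μ_3 ≥ −√(μ_1 μ_2) if μ_2 ≥ μ_1/4. -/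
open Matrix ComplexOrder

/-!
Diagonalise `W = U diag(μ) U*` and test it against the states `ρ = U diag(d) U*` diagonal in the
same basis. Pairing the spectrum `λ₀ ≥ λ₁ ≥ λ₂` of `ρ` in reverse order against `μ`, the
hypothesis gives `μ₀λ₂ + μ₁λ₁ + μ₂λ₀ ≥ 0` whenever `λ₀ ≤ 2√(λ₁λ₂)`. On the boundary
`λ ∝ (2r, 1, r²)`, `r ∈ [1/2, 1]`, this says that `μ₀r² + 2μ₂r + μ₁ ≥ 0` on `[1/2, 1]`.
At `r = 1/2` this is the first bound. For the second, evaluate at the minimiser `r = -μ₂/μ₀`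
when it lies in `[1/2, 1]`, which gives `μ₂² ≤ μ₀μ₁`; otherwise `μ₁ ≥ μ₀/4` already gives
`√(μ₀μ₁) ≥ μ₀/2 ≥ -μ₂`.
-/

namespace Matrix

open Finset Unitary Polynomial

variable {n 𝕜 : Type*} [Fintype n] [DecidableEq n] [RCLike 𝕜]

lemma trace_conjStarAlgAut (U : unitaryGroup n 𝕜) (A : Matrix n n 𝕜) :
    (conjStarAlgAut 𝕜 _ U A).trace = A.trace := by
  rw [conjStarAlgAut_apply, trace_mul_cycle, coe_star_mul_self, one_mul]

lemma IsHermitian.map_eigenvalues_conjStarAlgAut_diagonal (U : unitaryGroup n 𝕜) (d : n → ℝ)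
    (hA : (conjStarAlgAut 𝕜 _ U (diagonal (RCLike.ofReal ∘ d))).IsHermitian) :
    univ.val.map hA.eigenvalues = univ.val.map d := by
  apply Multiset.map_injective (RCLike.ofReal_injective (K := 𝕜))
  rw [Multiset.map_map, Multiset.map_map, ← hA.roots_charpoly_eq_eigenvalues, conjStarAlgAut_apply,
    charpoly_mul_comm, ← mul_assoc, coe_star_mul_self, one_mul, charpoly_diagonal,
    prod_eq_multiset_prod, ← roots_multiset_prod_X_sub_C (univ.val.map (RCLike.ofReal ∘ d)),
    Multiset.map_map]
  rfl

lemma IsHermitian.exists_posSemidef_map_eigenvalues_eq {W : Matrix n n 𝕜} (hW : W.IsHermitian)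
    {d : n → ℝ} (hd : 0 ≤ d) :
    ∃ (ρ : Matrix n n 𝕜) (hρ : ρ.PosSemidef), univ.val.map hρ.1.eigenvalues = univ.val.map d ∧
      ρ.trace = ∑ i, (d i : 𝕜) ∧ (W * ρ).trace = ∑ i, (hW.eigenvalues i * d i : 𝕜) := by
  have hρ :
      (conjStarAlgAut 𝕜 _ hW.eigenvectorUnitary (diagonal (RCLike.ofReal ∘ d))).PosSemidef := by
    rw [conjStarAlgAut_apply, star_eq_conjTranspose]
    exact (posSemidef_diagonal_iff.mpr fun i => RCLike.ofReal_nonneg.mpr (hd i))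
      |>.mul_mul_conjTranspose_same _
  refine ⟨_, hρ, IsHermitian.map_eigenvalues_conjStarAlgAut_diagonal _ d hρ.1, ?_, ?_⟩
  · rw [trace_conjStarAlgAut, trace_diagonal]; rfl
  · rw [congrArg (· * _) hW.spectral_theorem, ← map_mul, trace_conjStarAlgAut,
      diagonal_mul_diagonal, trace_diagonal]
    simp

end Matrix

open Finset

lemma Antitone.eq_of_map_univ_val_eq {n : ℕ} {α : Type*} [PartialOrder α] {f g : Fin n → α}
    (hf : Antitone f) (hg : Antitone g) (h : univ.val.map f = univ.val.map g) : f = g :=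
  List.ofFn_injective <| (Multiset.coe_eq_coe.mp (by simpa only [Fin.univ_val_map] using h))
    |>.eq_of_sortedGE hf.sortedGE_ofFn hg.sortedGE_ofFn

theorem sum_mul_rev_nonneg_of_re_trace_mul_nonneg {n : ℕ} {𝕜 : Type*} [RCLike 𝕜]
    {W : Matrix (Fin n) (Fin n) 𝕜}
    (hW : W.IsHermitian) {μ : Fin n → ℝ}
    (hμ : ∃ σ : Equiv.Perm (Fin n), ∀ i, hW.eigenvalues i = μ (σ i)) (P : (Fin n → ℝ) → Prop)
    (hpos : ∀ (ρ : Matrix (Fin n) (Fin n) 𝕜) (hρ : ρ.PosSemidef), ρ.trace = 1 →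
      (∀ lam : Fin n → ℝ, Antitone lam →
        (∃ σ : Equiv.Perm (Fin n), ∀ i, hρ.1.eigenvalues i = lam (σ i)) → P lam) →
      0 ≤ RCLike.re (W * ρ).trace)
    {lam : Fin n → ℝ} (hlam : Antitone lam) (hnonneg : 0 ≤ lam) (hsum : ∑ i, lam i = 1)
    (hP : P lam) :
    0 ≤ ∑ i, μ i * lam i.rev := by
  obtain ⟨σ, hσ⟩ := hμ
  have map_comp_perm (f : Fin n → ℝ) (e : Equiv.Perm (Fin n)) :
      univ.val.map (f ∘ e) = univ.val.map f := by
    rw [← Multiset.map_map, Multiset.map_univ_val_equiv]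
  obtain ⟨ρ, hρ, hspec, htr, htrW⟩ :=
    hW.exists_posSemidef_map_eigenvalues_eq (d := lam ∘ Fin.revPerm ∘ σ)
      fun i => hnonneg (σ i).rev
  have hsum' : ∑ i, lam (σ i).rev = 1 := by
    rw [Equiv.sum_comp σ (fun j => lam j.rev)]
    exact (Equiv.sum_comp Fin.revPerm lam).trans hsum
  have htrW' : ∑ i, μ i * lam i.rev = RCLike.re (W * ρ).trace := by
    rw [htrW, ← Equiv.sum_comp σ]
    simp [hσ]
  rw [htrW']
  refine hpos ρ hρ (by simpa [htr] using congrArg ((↑) : ℝ → 𝕜) hsum') ?_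
  rintro lam' hlam' ⟨σ', hσ'⟩
  have : lam' = lam := hlam'.eq_of_map_univ_val_eq hlam <| by
    rw [← map_comp_perm lam' σ',
      show lam' ∘ σ' = hρ.1.eigenvalues from funext fun i => (hσ' i).symm, hspec,
      ← Function.comp_assoc, map_comp_perm, map_comp_perm]
  exact this ▸ hP

theorem quadratic_nonneg_of_sum_mul_rev_nonneg {μ : Fin 3 → ℝ}
    (h : ∀ lam : Fin 3 → ℝ, Antitone lam → 0 ≤ lam → ∑ i, lam i = 1 →
      lam 0 ≤ 2 * √(lam 1 * lam 2) → 0 ≤ ∑ i, μ i * lam i.rev)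
    {r : ℝ} (hr : r ∈ Set.Icc (1 / 2 : ℝ) 1) :
    0 ≤ μ 0 * r ^ 2 + 2 * μ 2 * r + μ 1 := by
  obtain ⟨hr₁, hr₂⟩ := hr
  have hden : 0 < (1 + r) ^ 2 := by positivity
  set lam : Fin 3 → ℝ := ![2 * r / (1 + r) ^ 2, 1 / (1 + r) ^ 2, r ^ 2 / (1 + r) ^ 2] with hlam
  have key := h lam
    (Fin.antitone_iff_succ_le.mpr fun i => by
      fin_cases i <;>
        simp only [Fin.zero_eta, Fin.mk_one, Fin.succ_zero_eq_one, Fin.succ_one_eq_two,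
          Fin.castSucc_zero, Fin.castSucc_one, hlam, Matrix.cons_val] <;>
        field_simp <;> nlinarith)
    (fun i => by
      fin_cases i <;>
        simp only [Pi.zero_apply, Fin.zero_eta, Fin.mk_one, Fin.reduceFinMk, hlam, Matrix.cons_val] <;>
        positivity)
    (by simp only [Fin.sum_univ_three, hlam, Matrix.cons_val]; field_simp; ring)
    (by
      simp only [hlam, Matrix.cons_val]
      rw [show 1 / (1 + r) ^ 2 * (r ^ 2 / (1 + r) ^ 2) = (r / (1 + r) ^ 2) ^ 2 by ring,
        Real.sqrt_sq (by positivity)]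
      exact le_of_eq (by ring))
  have : μ 0 * r ^ 2 + 2 * μ 2 * r + μ 1 = (∑ i, μ i * lam i.rev) * (1 + r) ^ 2 := by
    simp only [Fin.sum_univ_three, Fin.rev_zero, Fin.reduceLast, Fin.reduceRev, hlam,
      Matrix.cons_val]
    field_simp
    ring
  rw [this]
  exact mul_nonneg key hden.le

lemma neg_sqrt_mul_le_of_quadratic_nonneg {a b c : ℝ} (hba : b ≤ a) (hab : a / 4 ≤ b)
    (hq : ∀ r ∈ Set.Icc (1 / 2 : ℝ) 1, 0 ≤ a * r ^ 2 + 2 * c * r + b) :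
    -√(a * b) ≤ c := by
  rcases le_or_gt 0 c with hc | hc
  · exact (neg_nonpos.mpr (Real.sqrt_nonneg _)).trans hc
  have h₁ := hq 1 ⟨by norm_num, le_rfl⟩
  have ha : 0 < a := by linarith
  apply Real.neg_sqrt_le_of_sq_le
  rcases le_or_gt (-c) (a / 2) with hsmall | hbig
  · nlinarith
  have hmin := hq (-c / a) ⟨by rw [le_div_iff₀ ha]; linarith, by rw [div_le_one ha]; linarith⟩
  have : a * (a * (-c / a) ^ 2 + 2 * c * (-c / a) + b) = a * b - c ^ 2 := by
    field_simp
    ring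
  nlinarith [mul_nonneg ha.le hmin]

theorem stmt13 (W : Matrix (Fin 3) (Fin 3) ℂ) (hW : W.IsHermitian)
    (μ : Fin 3 → ℝ) (hμsort : ∀ i j : Fin 3, i ≤ j → μ j ≤ μ i)
    (hμ : ∃ σ : Equiv.Perm (Fin 3), ∀ i, hW.eigenvalues i = μ (σ i))
    (hpos : ∀ (ρ : Matrix (Fin 3) (Fin 3) ℂ) (hρ : ρ.PosSemidef), ρ.trace = 1 →
      (∀ lam : Fin 3 → ℝ, (∀ i j : Fin 3, i ≤ j → lam j ≤ lam i) →
        (∃ σ : Equiv.Perm (Fin 3), ∀ i, hρ.1.eigenvalues i = lam (σ i)) →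
        lam 0 ≤ 2 * Real.sqrt (lam 1 * lam 2)) →
      0 ≤ ((W * ρ).trace).re) :
    (μ 1 < μ 0 / 4 → -(μ 0 / 4) - μ 1 ≤ μ 2) ∧
    (μ 0 / 4 ≤ μ 1 → -Real.sqrt (μ 0 * μ 1) ≤ μ 2) := by
  have hq : ∀ r ∈ Set.Icc (1 / 2 : ℝ) 1, 0 ≤ μ 0 * r ^ 2 + 2 * μ 2 * r + μ 1 := fun _ =>
    quadratic_nonneg_of_sum_mul_rev_nonneg fun _ hlam =>
      sum_mul_rev_nonneg_of_re_trace_mul_nonneg hW hμ _ hpos hlam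
  refine ⟨fun _ => ?_, fun h => neg_sqrt_mul_le_of_quadratic_nonneg (hμsort 0 1 zero_le_one) h hq⟩
  have := hq (1 / 2) ⟨le_rfl, by norm_num⟩
  linarith
end

section
/- For every integer d ≥ 1, there exists a positive semidefinite matrix X on C^d ⊗ C^d such that P X^Γ P has exactly d(d−1)/2 strictly negative eigenvalues, where P is the orthogonal projection onto the symmetric subspace and Γ is the partial transpose. -/
open Matrix ComplexOrder

/-!
Take `X = ∑ᵢⱼ (d δᵢⱼ - 1) |ii⟩⟨jj|`, which is positive semidefinite because `X² = d X`. Its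
partial transpose is `D F`, where `F` is the swap operator and `D` is diagonal with entry `d - 1`
at `(i, i)` and `-1` elsewhere. Since `D` commutes with `F` and `P F = P` for `P = (1 + F) / 2`,
we get `P X^Γ P = D P =: M` and `M² = D M`, so every eigenvalue of `M` is `0`, `-1` or `d - 1`.
The traces of `M` and `M²` then pin down the multiplicity of `-1`: it is `d (d - 1) / 2`.
-/

namespace Matrix.IsHermitian

variable {𝕜 n : Type*} [RCLike 𝕜] [Fintype n] {A : Matrix n n 𝕜}

lemma posSemidef_of_mul_self_eq_smul (hA : A.IsHermitian) {c : ℝ} (hc : 0 < c)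
    (h : A * A = c • A) : A.PosSemidef := by
  have : A = c⁻¹ • (Aᴴ * A) := by
    rw [hA.eq, h, smul_smul, inv_mul_cancel₀ hc.ne', one_smul]
  rw [this]
  exact (posSemidef_conjTranspose_mul_self A).smul (inv_nonneg.mpr hc.le)

variable [DecidableEq n]

lemma trace_pow_eq_sum_eigenvalues_pow (hA : A.IsHermitian) (k : ℕ) :
    (A ^ k).trace = ∑ i, (hA.eigenvalues i : 𝕜) ^ k := by
  conv_lhs => rw [hA.spectral_theorem, ← map_pow, Unitary.conjStarAlgAut_apply, trace_mul_cycle,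
    Unitary.coe_star_mul_self, one_mul, diagonal_pow, trace_diagonal]
  rfl

lemma eigenvalues_eq_zero_or_exists_of_mul_self_eq (hA : A.IsHermitian) {f : n → 𝕜}
    (h : A * A = diagonal f * A) (i : n) :
    hA.eigenvalues i = 0 ∨ ∃ p, (hA.eigenvalues i : 𝕜) = f p := by
  set μ := hA.eigenvalues i
  set v : n → 𝕜 := ⇑(hA.eigenvectorBasis i)
  have hAv : A *ᵥ v = (μ : 𝕜) • v := by
    rw [hA.mulVec_eigenvectorBasis, RCLike.real_smul_eq_coe_smul (K := 𝕜)]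
  obtain ⟨p, hp⟩ : ∃ p, v p ≠ 0 := Function.ne_iff.mp <|
    (WithLp.ofLp_eq_zero 2).ne.2 <| hA.eigenvectorBasis.orthonormal.ne_zero i
  have hvp : (μ : 𝕜) ^ 2 * v p = μ * f p * v p := by
    have := congrFun (congrArg (· *ᵥ v) h) p
    simp only [← mulVec_mulVec, hAv, mulVec_smul, mulVec_diagonal, Pi.smul_apply,
      smul_eq_mul] at this
    linear_combination this
  have : (μ : 𝕜) * (μ - f p) = 0 := mul_right_cancel₀ hp (by linear_combination hvp)
  rcases mul_eq_zero.mp this with h0 | h1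
  · exact Or.inl (by exact_mod_cast h0)
  · exact Or.inr ⟨p, sub_eq_zero.mp h1⟩

end Matrix.IsHermitian

lemma card_neg_mul_eq_sum_sq_sub_mul_sum {ι : Type*} [Fintype ι] (μ : ι → ℝ) {c : ℝ} (hc : 0 ≤ c)
    (hμ : ∀ i, μ i = 0 ∨ μ i = -1 ∨ μ i = c) :
    (Finset.univ.filter (fun i => μ i < 0)).card * (c + 1) = ∑ i, μ i ^ 2 - c * ∑ i, μ i := by
  have hterm : ∀ i, μ i ^ 2 - c * μ i = if μ i < 0 then c + 1 else 0 := by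
    intro i
    rcases hμ i with h | h | h
    · simp [h]
    · rw [h, if_pos (by norm_num)]; ring
    · rw [h, if_neg hc.not_gt]; ring
  rw [Finset.mul_sum, ← Finset.sum_sub_distrib, Finset.sum_congr rfl fun i _ => hterm i,
    Finset.sum_ite, Finset.sum_const_zero, add_zero, Finset.sum_const, nsmul_eq_mul]

lemma Fin.sum_ite_fst_eq_snd {R : Type*} [CommRing R] (n : ℕ) (a b : R) :
    ∑ p : Fin n × Fin n, (if p.1 = p.2 then a else b) = n * a + (n * n - n) * b := by
  have : ∀ p : Fin n × Fin n, (if p.1 = p.2 then a else b) = b + if p.1 = p.2 then a - b else 0 :=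
    fun p => by split_ifs <;> ring
  simp only [this, Finset.sum_add_distrib, Finset.sum_const, Finset.card_univ, Fintype.card_prod,
    Fintype.card_fin, nsmul_eq_mul, Nat.cast_mul, Fintype.sum_prod_type, Finset.sum_ite_eq,
    Finset.mem_univ, if_true]
  ring

namespace SymmetricSubspace

variable {d : ℕ}

noncomputable def swapMatrix (d : ℕ) : Matrix (Fin d × Fin d) (Fin d × Fin d) ℂ :=
  (Equiv.prodComm (Fin d) (Fin d)).toPEquiv.toMatrix

noncomputable def diagWeight (d : ℕ) (p : Fin d × Fin d) : ℂ :=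
  (if p.1 = p.2 then (d : ℂ) else 0) - 1

noncomputable def witness (d : ℕ) : Matrix (Fin d × Fin d) (Fin d × Fin d) ℂ :=
  fun p q => if p.1 = p.2 ∧ q.1 = q.2 then diagWeight d (p.1, q.1) else 0

noncomputable def ptransCompression (d : ℕ) : Matrix (Fin d × Fin d) (Fin d × Fin d) ℂ :=
  diagonal (diagWeight d) * symProj d

lemma swapMatrix_mul_self : swapMatrix d * swapMatrix d = 1 := by
  ext p q
  simp [swapMatrix, PEquiv.toMatrix_toPEquiv_mul, PEquiv.toMatrix_apply, one_apply]

lemma swapMatrix_mul_diagonal (f : Fin d × Fin d → ℂ) :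
    swapMatrix d * diagonal f = diagonal (f ∘ Prod.swap) * swapMatrix d := by
  ext p q
  simp +contextual [swapMatrix]

lemma symProj_eq : symProj d = (2⁻¹ : ℂ) • (1 + swapMatrix d) := by
  ext p q
  simp [symProj, swapMatrix, PEquiv.toMatrix_apply, one_apply, Prod.ext_iff, and_comm,
    div_eq_inv_mul]

lemma isHermitian_symProj : (symProj d).IsHermitian := by
  ext p q
  simp [symProj, eq_comm, and_comm]

lemma symProj_mul_swapMatrix : symProj d * swapMatrix d = symProj d := by
  rw [symProj_eq, smul_mul_assoc, add_mul, swapMatrix_mul_self, one_mul, add_comm]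

lemma symProj_mul_self : symProj d * symProj d = symProj d := by
  nth_rewrite 2 [symProj_eq]
  rw [mul_smul_comm, mul_add, mul_one, symProj_mul_swapMatrix, ← two_smul ℂ, smul_smul]
  norm_num

lemma diagWeight_comp_swap : diagWeight d ∘ Prod.swap = diagWeight d := by
  funext p
  simp [diagWeight, eq_comm]

lemma isHermitian_diagonal_diagWeight : (diagonal (diagWeight d)).IsHermitian :=
  isHermitian_diagonal_of_self_adjoint _ <| funext fun p => by simp [diagWeight, apply_ite]

lemma symProj_mul_diagonal_diagWeight :
    symProj d * diagonal (diagWeight d) = diagonal (diagWeight d) * symProj d := by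
  rw [symProj_eq, smul_mul_assoc, mul_smul_comm, add_mul, mul_add, one_mul, mul_one,
    swapMatrix_mul_diagonal, diagWeight_comp_swap]

lemma sum_diagWeight_mul_diagWeight (a b : Fin d) :
    ∑ k, diagWeight d (a, k) * diagWeight d (k, b) = d * diagWeight d (a, b) := by
  simp [diagWeight, sub_mul, mul_sub, Finset.sum_sub_distrib, Finset.sum_ite_eq,
    Finset.sum_ite_eq']

lemma isHermitian_witness : (witness d).IsHermitian := by
  ext p q
  have hw : ∀ a b, star (diagWeight d (a, b)) = diagWeight d (b, a) := fun a b => by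
    simp [diagWeight, apply_ite, eq_comm]
  simp only [conjTranspose_apply, witness, and_comm (a := q.1 = q.2)]
  split_ifs <;> simp [hw]

lemma witness_mul_self : witness d * witness d = (d : ℝ) • witness d := by
  ext p q
  simp only [mul_apply, witness, ite_and, mul_ite, ite_mul, zero_mul, mul_zero,
    Fintype.sum_prod_type, Finset.sum_ite_eq, Finset.mem_univ, if_true, Finset.sum_ite_irrel,
    sum_diagWeight_mul_diagWeight, Finset.sum_const_zero, Matrix.smul_apply, smul_ite,
    Complex.real_smul, Complex.ofReal_natCast, smul_zero]
  split_ifs <;> rfl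

lemma posSemidef_witness (hd : 0 < d) : (witness d).PosSemidef :=
  isHermitian_witness.posSemidef_of_mul_self_eq_smul (by exact_mod_cast hd) witness_mul_self

lemma ptrans_witness : ptrans (witness d) = diagonal (diagWeight d) * swapMatrix d := by
  ext p q
  obtain rfl | hq := eq_or_ne q p.swap
  · simp [ptrans, witness, swapMatrix]
  · have : ¬(p.1 = q.2 ∧ q.1 = p.2) := fun h => hq (Prod.ext h.2 h.1.symm)
    simp [ptrans, witness, swapMatrix, this, hq.symm]

lemma symProj_mul_ptrans_witness_mul_symProj :
    symProj d * ptrans (witness d) * symProj d = ptransCompression d :=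
  calc symProj d * ptrans (witness d) * symProj d
      = diagonal (diagWeight d) * (symProj d * swapMatrix d) * symProj d := by
        rw [ptrans_witness, ← mul_assoc, symProj_mul_diagonal_diagWeight,
          mul_assoc (diagonal _) (symProj d)]
    _ = ptransCompression d := by
        rw [symProj_mul_swapMatrix, mul_assoc, symProj_mul_self, ptransCompression]

lemma isHermitian_ptransCompression (d : ℕ) : (ptransCompression d).IsHermitian := by
  rw [IsHermitian, ptransCompression, conjTranspose_mul, isHermitian_symProj.eq,
    isHermitian_diagonal_diagWeight.eq, symProj_mul_diagonal_diagWeight]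

lemma ptransCompression_mul_self :
    ptransCompression d * ptransCompression d = diagonal (diagWeight d) * ptransCompression d := by
  rw [ptransCompression, mul_assoc, ← mul_assoc (symProj d), symProj_mul_diagonal_diagWeight,
    mul_assoc, symProj_mul_self]

lemma ptransCompression_pow_succ (k : ℕ) :
    ptransCompression d ^ (k + 1) = diagonal (diagWeight d) ^ (k + 1) * symProj d := by
  induction k with
  | zero => simp [ptransCompression]
  | succ k ih =>
    rw [pow_succ, ih, ptransCompression, mul_assoc, ← mul_assoc (symProj d),
      symProj_mul_diagonal_diagWeight, mul_assoc, symProj_mul_self, ← mul_assoc, ← pow_succ]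

lemma trace_diagonal_diagWeight_pow_mul_symProj (k : ℕ) :
    (diagonal (diagWeight d) ^ k * symProj d).trace =
      d * ((d : ℂ) - 1) ^ k + ((d : ℂ) * d - d) / 2 * (-1) ^ k := by
  have hdiag : ∀ p : Fin d × Fin d, (diagonal (diagWeight d) ^ k * symProj d) p p
      = if p.1 = p.2 then ((d : ℂ) - 1) ^ k else (-1) ^ k * 2⁻¹ := by
    rintro ⟨i, j⟩
    by_cases h : i = j <;> simp [h, diagonal_pow, diagWeight, symProj, eq_comm]
  simp only [trace, diag_apply, hdiag, Fin.sum_ite_fst_eq_snd]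
  ring

lemma eigenvalues_ptransCompression (i : Fin d × Fin d) :
    (isHermitian_ptransCompression d).eigenvalues i = 0 ∨
      (isHermitian_ptransCompression d).eigenvalues i = -1 ∨
      (isHermitian_ptransCompression d).eigenvalues i = d - 1 := by
  rcases (isHermitian_ptransCompression d).eigenvalues_eq_zero_or_exists_of_mul_self_eq
    ptransCompression_mul_self i with h | ⟨p, hp⟩
  · exact Or.inl h
  · rw [diagWeight] at hp
    split_ifs at hp
    · exact Or.inr (Or.inr (Complex.ofReal_injective (by push_cast; exact hp)))
    · exact Or.inr (Or.inl (Complex.ofReal_injective (by push_cast; rwa [zero_sub] at hp)))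

lemma sum_eigenvalues_ptransCompression_pow_succ (k : ℕ) :
    ∑ i, (isHermitian_ptransCompression d).eigenvalues i ^ (k + 1) =
      d * ((d : ℝ) - 1) ^ (k + 1) + ((d : ℝ) * d - d) / 2 * (-1) ^ (k + 1) := by
  have := (isHermitian_ptransCompression d).trace_pow_eq_sum_eigenvalues_pow (k + 1)
  rw [ptransCompression_pow_succ, trace_diagonal_diagWeight_pow_mul_symProj] at this
  apply Complex.ofReal_injective
  push_cast
  exact this.symm

end SymmetricSubspace

open SymmetricSubspace

theorem stmt18 (d : ℕ) (hd : 1 ≤ d) :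
    ∃ X : Matrix (Fin d × Fin d) (Fin d × Fin d) ℂ, X.PosSemidef ∧
      ∃ h : (symProj d * ptrans X * symProj d).IsHermitian,
        (Finset.univ.filter (fun i => h.eigenvalues i < 0)).card = d * (d - 1) / 2 := by
  refine ⟨witness d, posSemidef_witness hd, ?_⟩
  rw [symProj_mul_ptrans_witness_mul_symProj]
  refine ⟨isHermitian_ptransCompression d, ?_⟩
  have hd' : (1 : ℝ) ≤ d := by exact_mod_cast hd
  have hcount := card_neg_mul_eq_sum_sq_sub_mul_sum _ (by linarith : (0 : ℝ) ≤ d - 1)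
    eigenvalues_ptransCompression
  have hsum := sum_eigenvalues_ptransCompression_pow_succ (d := d) 0
  have hsum_sq := sum_eigenvalues_ptransCompression_pow_succ (d := d) 1
  simp only [zero_add, pow_one] at hsum
  rw [← Nat.choose_two_right, ← Nat.cast_inj (R := ℝ), Nat.cast_choose_two]
  apply mul_right_cancel₀ (by linarith : (d : ℝ) ≠ 0)
  linear_combination hcount + hsum_sq - (d - 1 : ℝ) * hsum
end
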